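/- arXiv:2009.00698 — 5 statements merged into one kernel-verified Lean document; each statement's English description precedes it below -/
import Mathlib

section
/- Let U : ℝ → ℝ be a C² function with 0 < U(ξ) < ν for all ξ ∈ ℝ that satisfies the traveling-wave equation −2U′(ξ) = U″(ξ) + U(ξ)·(1 − A·(log(ν/U(ξ)))^{1−r}) for all ξ ∈ ℝ, together with U(ξ) → 1 as ξ → −∞ and U(ξ) → 0 as ξ → +∞. Then U(ξ) < 1 for all ξ ∈ ℝ and U is nonincreasing on ℝ (U′(ξ) ≤ 0 for all ξ). -/
/-!
Write the equation as `U'' + 2 U' + F(U) = 0` with `F(u) = u (1 - A log(ν/u)^(1-r))`. If `F` did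
not vanish at the limit `L` of `U` at `-∞`, then `(U' + 2 U)' = -F(U)` would keep a strict sign
there, so `U' + 2 U`, hence `U'`, hence `U` would blow up. As `log ν = A^(-1/(r-1))` gives
`F(1) = 1 - A²`, this forces `A = 1` and `ν = e`; then `F > 0` on `(0, 1)` and `F < 0` on `(1, e)`.
At a global maximum `U'' = -F(U) ≤ 0`, so `U ≤ 1`. A point where `U = 1` is then a maximum, hence
the rest point `(1, 0)` of the first-order system, whose field is locally Lipschitz there, so
`U ≡ 1` by uniqueness, contradicting `U → 0`. Finally `(e^{2ξ} U')' = -e^{2ξ} F(U) ≤ 0`, so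
`U'(ξ₀) > 0` would give `U' ≥ U'(ξ₀)` on `(-∞, ξ₀]`, and `U → -∞` at `-∞`.
-/

open Real Filter Set Topology

theorem tendsto_atBot_of_eventually_le_deriv {f : ℝ → ℝ} {c : ℝ} (hf : Differentiable ℝ f)
    (hc : 0 < c) (h : ∀ᶠ x in atBot, c ≤ deriv f x) : Tendsto f atBot atBot := by
  obtain ⟨a, ha⟩ := eventually_atBot.mp h
  have hgrowth : ∀ x ≤ a, f x ≤ f a + c * (x - a) := fun x hx => by
    have := (convex_Iic a).mul_sub_le_image_sub_of_le_deriv hf.continuous.continuousOn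
      hf.differentiableOn (fun y hy => ha y (interior_subset (s := Iic a) hy)) x hx a
      self_mem_Iic hx
    linarith
  have hlin : Tendsto (fun x => f a + c * (x - a)) atBot atBot :=
    tendsto_atBot_add_const_left _ _
      ((tendsto_atBot_add_const_right _ _ tendsto_id).const_mul_atBot hc)
  exact tendsto_atBot_mono' atBot (eventually_atBot.mpr ⟨a, hgrowth⟩) hlin

theorem IsLocalMax.deriv_deriv_nonpos {f : ℝ → ℝ} {c : ℝ} (h : IsLocalMax f c)
    (hc : ContinuousAt f c) : deriv (deriv f) c ≤ 0 := by
  by_contra! hpos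
  have hmin := isLocalMin_of_deriv_deriv_pos hpos h.deriv_eq_zero hc
  have hconst : f =ᶠ[𝓝 c] fun _ => f c := (h.and hmin).mono fun y hy => le_antisymm hy.1 hy.2
  rw [hconst.deriv.deriv_eq] at hpos
  simp at hpos

def waveField (G : ℝ → ℝ) (z : ℝ × ℝ) : ℝ × ℝ := (z.2, -(2 * z.2) - G z.1)

theorem LipschitzOnWith.waveField {G : ℝ → ℝ} {K : NNReal} {T : Set ℝ}
    (hG : LipschitzOnWith K G T) : LipschitzOnWith (K + 2) (waveField G) (T ×ˢ univ) := by
  refine LipschitzOnWith.of_dist_le_mul fun z hz w hw => ?_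
  have hGzw : |G z.1 - G w.1| ≤ K * |z.1 - w.1| := by
    simpa only [Real.dist_eq] using hG.dist_le_mul _ hz.1 _ hw.1
  simp only [_root_.waveField, Prod.dist_eq, Real.dist_eq, NNReal.coe_add, NNReal.coe_ofNat]
  have h1 := le_max_left |z.1 - w.1| |z.2 - w.2|
  have h2 := le_max_right |z.1 - w.1| |z.2 - w.2|
  have h3 : |-(2 * z.2) - G z.1 - (-(2 * w.2) - G w.1)| ≤ 2 * |z.2 - w.2| + |G z.1 - G w.1| :=
    calc _ = |-(2 * (z.2 - w.2)) + -(G z.1 - G w.1)| := by ring_nf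
      _ ≤ |-(2 * (z.2 - w.2))| + |-(G z.1 - G w.1)| := abs_add_le _ _
      _ = _ := by rw [abs_neg, abs_neg, abs_mul, abs_two]
  have hK := K.2
  refine max_le ?_ ?_ <;> nlinarith [abs_nonneg (z.1 - w.1)]

theorem not_tendsto_of_deriv_deriv_add_two_mul_deriv_le {f : ℝ → ℝ} {c : ℝ}
    (hf : Differentiable ℝ f) (hf' : Differentiable ℝ (deriv f)) (hc : 0 < c)
    (h : ∀ᶠ x in atBot, deriv (deriv f) x + 2 * deriv f x ≤ -c) (L : ℝ) :
    ¬ Tendsto f atBot (𝓝 L) := by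
  intro hL
  have hW : Tendsto (fun x => -(deriv f x + 2 * f x)) atBot atBot := by
    refine tendsto_atBot_of_eventually_le_deriv (hf'.add (hf.const_mul 2)).neg hc ?_
    filter_upwards [h] with x hx
    have : deriv (fun x => -(deriv f x + 2 * f x)) x = -(deriv (deriv f) x + 2 * deriv f x) :=
      ((hf' x).hasDerivAt.add ((hf x).hasDerivAt.const_mul 2)).neg.deriv
    linarith
  have hf'top : Tendsto (deriv f) atBot atTop := by
    refine tendsto_atTop_mono' atBot ?_
      ((tendsto_neg_atBot_atTop.comp hW).atTop_add (tendsto_const_nhds (x := -2 * (L + 1))))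
    filter_upwards [hL.eventually (eventually_lt_nhds (lt_add_one L))] with x hx
    simp only [Function.comp_apply]
    linarith
  exact not_tendsto_nhds_of_tendsto_atBot
    (tendsto_atBot_of_eventually_le_deriv hf one_pos (hf'top.eventually_ge_atTop 1)) L hL

theorem deriv_nonpos_of_deriv_deriv_add_two_mul_deriv_nonpos {f : ℝ → ℝ} {L : ℝ}
    (hf : Differentiable ℝ f) (hf' : Differentiable ℝ (deriv f)) (hL : Tendsto f atBot (𝓝 L))
    (h : ∀ x, deriv (deriv f) x + 2 * deriv f x ≤ 0) (x : ℝ) : deriv f x ≤ 0 := by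
  by_contra! hpos
  set p : ℝ → ℝ := fun t => exp (2 * t) * deriv f t
  have hp : ∀ t, HasDerivAt p (exp (2 * t) * (deriv (deriv f) t + 2 * deriv f t)) t := fun t => by
    have := ((hasDerivAt_id t).const_mul 2).exp.mul (hf' t).hasDerivAt
    exact this.congr_deriv (by simp only [id]; ring)
  have hanti : Antitone p := antitone_of_deriv_nonpos (fun t => (hp t).differentiableAt)
    fun t => (hp t).deriv ▸ mul_nonpos_of_nonneg_of_nonpos (exp_pos _).le (h t)
  have hge : ∀ t ≤ x, deriv f x ≤ deriv f t := fun t ht => by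
    have h1 : p x ≤ p t := hanti ht
    have h2 : exp (2 * t) ≤ exp (2 * x) := exp_le_exp.mpr (by linarith)
    simp only [p] at h1
    nlinarith [exp_pos (2 * t)]
  exact not_tendsto_nhds_of_tendsto_atBot
    (tendsto_atBot_of_eventually_le_deriv hf hpos (eventually_atBot.mpr ⟨x, hge⟩)) L hL

structure IsWaveProfile (G f : ℝ → ℝ) : Prop where
  differentiable : Differentiable ℝ f
  differentiable_deriv : Differentiable ℝ (deriv f)
  deriv_deriv_add : ∀ x, deriv (deriv f) x + 2 * deriv f x + G (f x) = 0

namespace IsWaveProfile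

variable {f G : ℝ → ℝ}

theorem eq_zero_of_tendsto_atBot {L : ℝ} (hw : IsWaveProfile G f)
    (hL : Tendsto f atBot (𝓝 L)) (hG : ContinuousAt G L) : G L = 0 := by
  have hGf : Tendsto (fun x => G (f x)) atBot (𝓝 (G L)) := hG.tendsto.comp hL
  rcases lt_trichotomy (G L) 0 with hneg | hzero | hpos
  · have hnf' : Differentiable ℝ (deriv (-f)) := by
      rw [deriv.neg']
      exact hw.differentiable_deriv.neg
    refine absurd hL.neg (not_tendsto_of_deriv_deriv_add_two_mul_deriv_le hw.differentiable.neg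
      hnf' (half_pos (neg_pos.mpr hneg)) ?_ (-L))
    filter_upwards [hGf.eventually (eventually_lt_nhds (by linarith : G L < G L / 2))] with x hx
    simp only [deriv.neg', deriv.fun_neg]
    linarith [hw.deriv_deriv_add x]
  · exact hzero
  · refine absurd hL (not_tendsto_of_deriv_deriv_add_two_mul_deriv_le hw.differentiable
      hw.differentiable_deriv (half_pos hpos) ?_ L)
    filter_upwards [hGf.eventually (eventually_gt_nhds (half_lt_self hpos))] with x hx
    linarith [hw.deriv_deriv_add x]

theorem nonneg_of_isLocalMax {c : ℝ} (hw : IsWaveProfile G f) (hc : IsLocalMax f c) :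
    0 ≤ G (f c) := by
  linarith [hw.deriv_deriv_add c, hc.deriv_eq_zero,
    hc.deriv_deriv_nonpos (hw.differentiable c).continuousAt]

theorem eventuallyEq_const {L t : ℝ} (hw : IsWaveProfile G f) (hG : ContDiffAt ℝ 1 G L)
    (hGL : G L = 0) (hft : f t = L) (hf't : deriv f t = 0) : f =ᶠ[𝓝 t] fun _ => L := by
  obtain ⟨K, T, hT, hlip⟩ := hG.exists_lipschitzOnWith
  have hsol : ∀ x, HasDerivAt (fun x => (f x, deriv f x)) (waveField G (f x, deriv f x)) x :=
    fun x => ((hw.differentiable x).hasDerivAt.prodMk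
      (hw.differentiable_deriv x).hasDerivAt).congr_deriv
        (by simp only [waveField, Prod.mk.injEq, true_and]; linarith [hw.deriv_deriv_add x])
  have hrest : ∀ x : ℝ, HasDerivAt (fun _ : ℝ => (L, (0 : ℝ))) (waveField G (L, 0)) x := fun x =>
    (hasDerivAt_const x _).congr_deriv
      (by simp only [waveField, mul_zero, neg_zero, hGL, sub_self]; rfl)
  have heq := ODE_solution_unique_of_eventually (v := fun _ => waveField G)
    (s := fun _ => T ×ˢ univ) (t₀ := t) (f := fun x => (f x, deriv f x)) (g := fun _ => (L, 0))
    (Eventually.of_forall fun _ => hlip.waveField)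
    (by
      filter_upwards [(hw.differentiable t).continuousAt.preimage_mem_nhds (hft ▸ hT)] with x hx
      exact ⟨hsol x, hx, mem_univ _⟩)
    (Eventually.of_forall fun x => ⟨hrest x, mem_of_mem_nhds hT, mem_univ _⟩)
    (by simp [hft, hf't])
  exact heq.fun_comp Prod.fst

theorem le_of_tendsto {a b L : ℝ} (hw : IsWaveProfile G f) (hbot : Tendsto f atBot (𝓝 a))
    (htop : Tendsto f atTop (𝓝 b)) (ha : a ≤ L) (hb : b ≤ L)
    (hG : ∀ x, L < f x → G (f x) < 0) (x : ℝ) : f x ≤ L := by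
  by_contra! hx
  have hfar : ∀ᶠ y in cocompact ℝ, f y ≤ f x := by
    rw [cocompact_eq_atBot_atTop, eventually_sup]
    exact ⟨hbot.eventually (eventually_le_nhds (ha.trans_lt hx)),
      htop.eventually (eventually_le_nhds (hb.trans_lt hx))⟩
  obtain ⟨c, hc⟩ := hw.differentiable.continuous.exists_forall_ge' x hfar
  exact (hG c (hx.trans_le (hc x))).not_ge (hw.nonneg_of_isLocalMax (Eventually.of_forall hc))

theorem lt_of_forall_le {b L : ℝ} (hw : IsWaveProfile G f) (hG : ContDiffAt ℝ 1 G L)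
    (hGL : G L = 0) (hle : ∀ x, f x ≤ L) (htop : Tendsto f atTop (𝓝 b)) (hbL : b ≠ L)
    (x : ℝ) : f x < L := by
  refine (hle x).lt_of_ne fun hx => hbL ?_
  -- every point of `{f = L}` is a maximum of `f`, hence a rest point `(L, 0)` of the system
  have hopen : IsOpen {y | f y = L} := isOpen_iff_mem_nhds.mpr fun y (hy : f y = L) =>
    hw.eventuallyEq_const hG hGL hy
      (IsLocalMax.deriv_eq_zero (Eventually.of_forall fun z => hy ▸ hle z))
  have huniv := IsClopen.eq_univ
    ⟨isClosed_eq hw.differentiable.continuous continuous_const, hopen⟩ ⟨x, hx⟩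
  have hconst : ∀ y, f y = L := eq_univ_iff_forall.mp huniv
  exact tendsto_nhds_unique htop (tendsto_const_nhds.congr fun y => (hconst y).symm)

end IsWaveProfile

noncomputable def reaction (A ν r u : ℝ) : ℝ := u * (1 - A * log (ν / u) ^ (1 - r))

theorem contDiffAt_reaction {A ν r u : ℝ} {n : WithTop ℕ∞} (hν : 0 < ν) (hu : 0 < u)
    (huν : u ≠ ν) : ContDiffAt ℝ n (reaction A ν r) u := by
  have hlog : log (ν / u) ≠ 0 := by
    rw [log_ne_zero]
    refine ⟨(div_pos hν hu).ne', ?_, by linarith [div_pos hν hu]⟩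
    rw [ne_eq, div_eq_one_iff_eq hu.ne']
    exact huν.symm
  refine contDiffAt_id.mul (contDiffAt_const.sub (contDiffAt_const.mul ?_))
  exact ((contDiffAt_log.mpr (div_pos hν hu).ne').comp u
    (contDiffAt_const.div contDiffAt_id hu.ne')).rpow_const_of_ne hlog

theorem reaction_one {A r : ℝ} (hA : 0 < A) (hr : r ≠ 1) :
    reaction A (exp (A ^ (-(1 / (r - 1))))) r 1 = 1 - A ^ 2 := by
  rw [reaction, div_one, log_exp, ← rpow_mul hA.le,
    show -(1 / (r - 1)) * (1 - r) = 1 by field_simp [sub_ne_zero.mpr hr]; ring, rpow_one]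
  ring

theorem reaction_one_exp_one {r u : ℝ} (hu : 0 < u) :
    reaction 1 (exp 1) r u = u * (1 - (1 - log u) ^ (1 - r)) := by
  rw [reaction, one_mul, log_div (exp_pos 1).ne' hu.ne', log_exp]

theorem reaction_nonneg {r u : ℝ} (hr : 1 ≤ r) (hu : 0 < u) (hu1 : u ≤ 1) :
    0 ≤ reaction 1 (exp 1) r u := by
  rw [reaction_one_exp_one hu]
  have := rpow_le_one_of_one_le_of_nonpos (by linarith [log_nonpos hu.le hu1] : 1 ≤ 1 - log u)
    (by linarith : 1 - r ≤ 0)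
  nlinarith

theorem reaction_neg {r u : ℝ} (hr : 1 < r) (hu1 : 1 < u) (hu : u < exp 1) :
    reaction 1 (exp 1) r u < 0 := by
  have hu0 : 0 < u := by linarith
  have hlog : log u < 1 := by simpa using log_lt_log hu0 hu
  rw [reaction_one_exp_one hu0]
  have := one_lt_rpow_of_pos_of_lt_one_of_neg (by linarith : 0 < 1 - log u)
    (by linarith [log_pos hu1] : 1 - log u < 1) (by linarith : 1 - r < 0)
  nlinarith

/-- monotonicity and boundedness by 1 of traveling waves. -/
theorem stmt_0 (r A : ℝ) (hr : 1 < r) (hA : 0 < A)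
    (ν : ℝ) (hν : ν = Real.exp (A ^ (-(1 / (r - 1)))))
    (U : ℝ → ℝ) (hUreg : ContDiff ℝ 2 U)
    (hUpos : ∀ ξ : ℝ, 0 < U ξ) (hUlt : ∀ ξ : ℝ, U ξ < ν)
    (hODE : ∀ ξ : ℝ, -2 * deriv U ξ =
      deriv (deriv U) ξ + U ξ * (1 - A * Real.log (ν / U ξ) ^ (1 - r)))
    (hlim_bot : Tendsto U atBot (nhds 1))
    (hlim_top : Tendsto U atTop (nhds 0)) :
    (∀ ξ : ℝ, U ξ < 1) ∧ (∀ ξ : ℝ, deriv U ξ ≤ 0) := by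
  have hU : Differentiable ℝ U := hUreg.differentiable (by norm_num)
  have hU' : Differentiable ℝ (deriv U) :=
    (hUreg.iterate_deriv' 1 1).differentiable (by norm_num)
  have hw : IsWaveProfile (reaction A ν r) U :=
    ⟨hU, hU', fun ξ => by rw [reaction]; linarith [hODE ξ]⟩
  have hν1 : 1 < ν := hν ▸ one_lt_exp_iff.mpr (rpow_pos_of_pos hA _)
  have hFsmooth : ContDiffAt ℝ 1 (reaction A ν r) 1 :=
    contDiffAt_reaction (by linarith) one_pos hν1.ne
  have hF1 : reaction A ν r 1 = 0 := hw.eq_zero_of_tendsto_atBot hlim_bot hFsmooth.continuousAt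
  obtain rfl : A = 1 := by
    have h1A : 1 - A ^ 2 = 0 := by rw [← reaction_one hA hr.ne', ← hν, hF1]
    nlinarith
  obtain rfl : ν = exp 1 := by rw [hν, one_rpow]
  have hle : ∀ ξ, U ξ ≤ 1 := hw.le_of_tendsto hlim_bot hlim_top le_rfl zero_le_one
    fun ξ hξ => reaction_neg hr hξ (hUlt ξ)
  refine ⟨hw.lt_of_forall_le hFsmooth hF1 hle hlim_top zero_ne_one,
    deriv_nonpos_of_deriv_deriv_add_two_mul_deriv_nonpos hU hU' hlim_bot fun ξ => ?_⟩
  linarith [hw.deriv_deriv_add ξ, reaction_nonneg hr.le (hUpos ξ) (hle ξ)]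
end

section
/- Let U be a minimal-speed traveling wave. Then there exists κ > 0 such that U(ξ)/(ξ·e^{−ξ}) → κ as ξ → +∞. -/
/-!
With `W = e^ξ U` the equation becomes `W'' = P W` where `P = A log(ν/U)^{1-r} > 0`, so `W'` is
increasing. Since `P → 0`, `W` grows at most like `e^{ξ/2}`; hence `log(ν/U) ≥ ξ/4` and
`P(ξ) ≤ K ξ^{1-r}`. Because `r > 3`, integrating `W'' = P W` against this bound keeps `W'` bounded,
so `W'` increases to a finite limit `κ`, which is positive because `W → 0` at `-∞` forces `W' ≥ 0`
somewhere. Finally `W(ξ)/ξ → κ`.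
-/

open Real Filter Set Topology

lemma sub_le_sub_of_hasDerivAt_le {f g f' g' : ℝ → ℝ} {a b : ℝ} (hab : a ≤ b)
    (hf : ∀ x ∈ Icc a b, HasDerivAt f (f' x) x) (hg : ∀ x ∈ Icc a b, HasDerivAt g (g' x) x)
    (h : ∀ x ∈ Ioo a b, f' x ≤ g' x) : f b - f a ≤ g b - g a := by
  have hfg : ∀ x ∈ Icc a b, HasDerivAt (f - g) (f' x - g' x) x :=
    fun x hx ↦ (hf x hx).sub (hg x hx)
  have := antitoneOn_of_hasDerivWithinAt_nonpos (convex_Icc a b)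
    (fun x hx ↦ (hfg x hx).continuousAt.continuousWithinAt)
    (fun x hx ↦ (hfg x (interior_subset hx)).hasDerivWithinAt)
    (fun x hx ↦ by rw [interior_Icc] at hx; linarith [h x hx])
    (left_mem_Icc.2 hab) (right_mem_Icc.2 hab) hab
  simp only [Pi.sub_apply] at this
  linarith

lemma le_exp_mul_of_hasDerivAt_add_mul_nonpos {φ φ' : ℝ → ℝ} {b ξ₀ ξ : ℝ}
    (hφ : ∀ ξ, HasDerivAt φ (φ' ξ) ξ) (h : ∀ ξ ≥ ξ₀, φ' ξ + b * φ ξ ≤ 0) (hξ : ξ₀ ≤ ξ) :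
    φ ξ ≤ exp (b * ξ₀) * φ ξ₀ * exp (-(b * ξ)) := by
  have hexp : ∀ x, HasDerivAt (fun x ↦ exp (b * x)) (exp (b * x) * b) x := fun x ↦ by
    simpa using ((hasDerivAt_id x).const_mul b).exp
  have key := sub_le_sub_of_hasDerivAt_le (g := fun _ ↦ 0) (g' := fun _ ↦ 0) hξ
    (fun x _ ↦ (hexp x).mul (hφ x)) (fun x _ ↦ hasDerivAt_const x 0)
    (fun x hx ↦ by nlinarith [h x hx.1.le, exp_pos (b * x)])
  simp only [Pi.mul_apply, sub_zero] at key
  have hinv : exp (b * ξ) * exp (-(b * ξ)) = 1 := by rw [← exp_add, add_neg_cancel, exp_zero]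
  calc φ ξ = exp (b * ξ) * φ ξ * exp (-(b * ξ)) := by rw [mul_right_comm, hinv, one_mul]
    _ ≤ exp (b * ξ₀) * φ ξ₀ * exp (-(b * ξ)) :=
      mul_le_mul_of_nonneg_right (by linarith) (exp_pos _).le

lemma tendsto_div_self_of_hasDerivAt {f f' : ℝ → ℝ} {κ : ℝ} (hf : ∀ x, HasDerivAt f (f' x) x)
    (h : Tendsto f' atTop (𝓝 κ)) : Tendsto (fun x ↦ f x / x) atTop (𝓝 κ) := by
  set g : ℝ → ℝ := fun x ↦ f x - κ * x
  have hg : ∀ x, HasDerivAt g (f' x - κ) x := fun x ↦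
    ((hf x).sub ((hasDerivAt_id' x).const_mul κ)).congr_deriv (by ring)
  have hg' : Tendsto (fun x ↦ f' x - κ) atTop (𝓝 0) := by simpa using h.sub_const κ
  have hlittle : g =o[atTop] id := by
    refine Asymptotics.isLittleO_iff.2 fun ε hε ↦ ?_
    obtain ⟨T, hT⟩ := eventually_atTop.1 <|
      (hg'.eventually (Metric.closedBall_mem_nhds 0 (half_pos hε))).and (eventually_ge_atTop 0)
    have hlip : ∀ x ≥ T, ‖g x - g T‖ ≤ ε / 2 * (x - T) := fun x hx ↦
      norm_image_sub_le_of_norm_deriv_le_segment' (fun y _ ↦ (hg y).hasDerivWithinAt)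
        (fun y hy ↦ by simpa using (hT y hy.1).1) x (right_mem_Icc.2 hx)
    filter_upwards [eventually_ge_atTop T, eventually_ge_atTop 0,
      eventually_ge_atTop (2 * ‖g T‖ / ε)] with x hxT hx0 hxg
    rw [div_le_iff₀ hε] at hxg
    rw [id, Real.norm_of_nonneg hx0]
    nlinarith [hlip x hxT, norm_sub_norm_le (g x) (g T), (hT T le_rfl).2]
  have hsum := hlittle.tendsto_div_nhds_zero.const_add κ
  rw [add_zero] at hsum
  refine hsum.congr' ?_
  filter_upwards [eventually_ne_atTop 0] with x hx
  simp only [g, id]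
  field_simp
  ring

lemma exists_deriv_nonneg_of_tendsto_atBot {W W' : ℝ → ℝ} (hW : ∀ ξ, HasDerivAt W (W' ξ) ξ)
    (hpos : ∀ ξ, 0 < W ξ) (hlim : Tendsto W atBot (𝓝 0)) : ∃ ξ, 0 ≤ W' ξ := by
  by_contra! hneg
  obtain ⟨ξ, hξW, hξ0⟩ :=
    ((hlim.eventually (gt_mem_nhds (hpos 0))).and (eventually_lt_atBot 0)).exists
  exact (strictAnti_of_hasDerivAt_neg hW hneg hξ0).not_gt hξW

section SecondOrder

variable {W W' P : ℝ → ℝ} (hW : ∀ ξ, HasDerivAt W (W' ξ) ξ)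
  (hW' : ∀ ξ, HasDerivAt W' (P ξ * W ξ) ξ) (hW0 : ∀ ξ, 0 ≤ W ξ)
include hW hW' hW0

/-- Factor `W'' - c²W = (d/dξ + c)(d/dξ - c) W ≤ 0` and integrate each first-order factor. -/
lemma exists_le_mul_exp_of_le_sq {c : ℝ} (hc : 0 < c) (hP : ∀ᶠ ξ in atTop, P ξ ≤ c ^ 2) :
    ∃ C, ∀ᶠ ξ in atTop, W ξ ≤ C * exp (c * ξ) := by
  obtain ⟨ξ₀, hξ₀⟩ := eventually_atTop.1 hP
  set C₁ := max (exp (c * ξ₀) * (W' ξ₀ - c * W ξ₀)) 0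
  have hC₁ : 0 ≤ C₁ := le_max_right _ _
  have hfirst : ∀ ξ ≥ ξ₀, W' ξ - c * W ξ ≤ C₁ * exp (-(c * ξ)) := fun ξ hξ ↦
    (le_exp_mul_of_hasDerivAt_add_mul_nonpos (φ := fun ξ ↦ W' ξ - c * W ξ)
      (fun ξ ↦ (hW' ξ).sub ((hW ξ).const_mul c))
      (fun ξ hξ ↦ by nlinarith [hξ₀ ξ hξ, hW0 ξ]) hξ).trans
      (mul_le_mul_of_nonneg_right (le_max_left _ _) (exp_pos _).le)
  set ψ := fun ξ ↦ W ξ + C₁ / (2 * c) * exp (-(c * ξ))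
  have hψ : ∀ ξ, HasDerivAt ψ (W' ξ - C₁ / 2 * exp (-(c * ξ))) ξ := fun ξ ↦ by
    have he : HasDerivAt (fun ξ ↦ exp (-(c * ξ))) (exp (-(c * ξ)) * -c) ξ := by
      simpa using ((hasDerivAt_id ξ).const_mul c).neg.exp
    exact ((hW ξ).add (he.const_mul (C₁ / (2 * c)))).congr_deriv (by field_simp; ring)
  refine ⟨exp (-c * ξ₀) * ψ ξ₀, eventually_atTop.2 ⟨ξ₀, fun ξ hξ ↦ ?_⟩⟩
  have hsecond := le_exp_mul_of_hasDerivAt_add_mul_nonpos hψ (b := -c) (fun ξ hξ ↦ by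
    have := hfirst ξ hξ
    simp only [ψ]
    field_simp
    nlinarith) hξ
  rw [neg_mul c ξ, neg_neg] at hsecond
  have : W ξ ≤ ψ ξ := le_add_of_nonneg_right (by positivity)
  linarith

/-- On `[a, ξ]` we have `W ≤ W a + s W' ξ`, so `W'' ≤ K W(a) s^{1-r} + K W'(ξ) s^{2-r}`; integrating
gives a bound for `W' ξ` in which `W' ξ` reappears with the small factor `K a^{3-r}/(r-3)`. -/
lemma deriv_le_of_le_rpow {K r a ξ : ℝ} (hr : 3 < r) (hK : 0 ≤ K) (ha : 0 < a) (haξ : a ≤ ξ)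
    (hmono : Monotone W') (hW'a : 0 ≤ W' a) (hP : ∀ s ∈ Icc a ξ, P s ≤ K * s ^ (1 - r)) :
    W' ξ ≤ W' a + K * W a * a ^ (2 - r) / (r - 2) + K * a ^ (3 - r) / (r - 3) * W' ξ := by
  have hW'ξ : 0 ≤ W' ξ := hW'a.trans (hmono haξ)
  have hlin : ∀ s ∈ Icc a ξ, W s ≤ W a + s * W' ξ := fun s hs ↦ by
    have := sub_le_sub_of_hasDerivAt_le (g := fun s ↦ s * W' ξ) (g' := fun _ ↦ W' ξ) hs.1
      (fun x _ ↦ hW x) (fun x _ ↦ (hasDerivAt_mul_const (W' ξ)).congr_deriv rfl)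
      (fun x hx ↦ hmono (hx.2.le.trans hs.2))
    nlinarith
  set g : ℝ → ℝ := fun s ↦ -(K * W a * s ^ (2 - r) / (r - 2)) - K * W' ξ * s ^ (3 - r) / (r - 3)
  have hg : ∀ s ∈ Icc a ξ,
      HasDerivAt g (K * W a * s ^ (1 - r) + K * W' ξ * s ^ (2 - r)) s := fun s hs ↦ by
    have hs0 : s ≠ 0 := (ha.trans_le hs.1).ne'
    have h2 := (hasDerivAt_rpow_const (p := 2 - r) (Or.inl hs0)).const_mul (K * W a)
    have h3 := (hasDerivAt_rpow_const (p := 3 - r) (Or.inl hs0)).const_mul (K * W' ξ)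
    refine ((h2.div_const (r - 2)).neg.sub (h3.div_const (r - 3))).congr_deriv ?_
    rw [show (2 : ℝ) - r - 1 = 1 - r by ring, show (3 : ℝ) - r - 1 = 2 - r by ring]
    field_simp [show r - 2 ≠ 0 by linarith, show r - 3 ≠ 0 by linarith]
    ring
  have hbound : ∀ s ∈ Ioo a ξ, P s * W s ≤ K * W a * s ^ (1 - r) + K * W' ξ * s ^ (2 - r) :=
    fun s hs ↦ by
    have hs0 : 0 < s := ha.trans hs.1
    have hpow : 0 ≤ K * s ^ (1 - r) := mul_nonneg hK (rpow_nonneg hs0.le _)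
    have hsplit : s ^ (2 - r) = s ^ (1 - r) * s := by
      rw [show 2 - r = (1 - r) + 1 by ring, rpow_add_one hs0.ne']
    calc P s * W s ≤ K * s ^ (1 - r) * (W a + s * W' ξ) :=
          mul_le_mul (hP s (Ioo_subset_Icc_self hs)) (hlin s (Ioo_subset_Icc_self hs)) (hW0 s) hpow
      _ = K * W a * s ^ (1 - r) + K * W' ξ * s ^ (2 - r) := by rw [hsplit]; ring
  have key := sub_le_sub_of_hasDerivAt_le haξ (fun s _ ↦ hW' s) hg hbound
  have hgξ : g ξ ≤ 0 := by
    have hξ0 : 0 ≤ ξ := ha.le.trans haξ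
    have : 0 ≤ K * W a * ξ ^ (2 - r) / (r - 2) :=
      div_nonneg (mul_nonneg (mul_nonneg hK (hW0 a)) (rpow_nonneg hξ0 _)) (by linarith)
    have : 0 ≤ K * W' ξ * ξ ^ (3 - r) / (r - 3) :=
      div_nonneg (mul_nonneg (mul_nonneg hK hW'ξ) (rpow_nonneg hξ0 _)) (by linarith)
    simp only [g]
    linarith
  simp only [g] at key hgξ
  have : K * W' ξ * a ^ (3 - r) / (r - 3) = K * a ^ (3 - r) / (r - 3) * W' ξ := by ring
  linarith

lemma bddAbove_range_deriv_of_le_rpow {K r : ℝ} (hr : 3 < r) (hK : 0 ≤ K) (hmono : Monotone W')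
    (hP : ∀ᶠ ξ in atTop, P ξ ≤ K * ξ ^ (1 - r)) (hW'nonneg : ∃ ξ, 0 ≤ W' ξ) :
    BddAbove (range W') := by
  obtain ⟨ξ₁, hξ₁⟩ := hW'nonneg
  have hsmall : Tendsto (fun a : ℝ ↦ K * a ^ (3 - r) / (r - 3)) atTop (𝓝 0) := by
    have := ((tendsto_rpow_neg_atTop (y := r - 3) (by linarith)).const_mul K).div_const (r - 3)
    simpa [neg_sub] using this
  obtain ⟨a, ⟨⟨hPa, hsmalla⟩, ha0⟩, hξ₁a⟩ := ((((eventually_forall_ge_atTop.2 hP).and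
    (hsmall.eventually (eventually_le_nhds one_half_pos))).and (eventually_gt_atTop 0)).and
    (eventually_ge_atTop ξ₁)).exists
  have hW'a : 0 ≤ W' a := hξ₁.trans (hmono hξ₁a)
  have hrest : 0 ≤ K * W a * a ^ (2 - r) / (r - 2) :=
    div_nonneg (mul_nonneg (mul_nonneg hK (hW0 a)) (rpow_nonneg ha0.le _)) (by linarith)
  refine ⟨2 * (W' a + K * W a * a ^ (2 - r) / (r - 2)), ?_⟩
  rintro _ ⟨ξ, rfl⟩
  rcases le_total ξ a with hξa | haξ
  · linarith [hmono hξa]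
  · have := deriv_le_of_le_rpow hW hW' hW0 hr hK ha0 haξ hmono hW'a (fun s hs ↦ hPa s hs.1)
    nlinarith [hW'a.trans (hmono haξ)]

end SecondOrder

section TravelingWave

variable {r A ν : ℝ} {U : ℝ → ℝ}

lemma hasDerivAt_exp_mul_add_deriv (hd1 : Differentiable ℝ U)
    (hd2 : Differentiable ℝ (deriv U))
    (hODE : ∀ ξ, -2 * deriv U ξ = deriv (deriv U) ξ + U ξ * (1 - A * log (ν / U ξ) ^ (1 - r)))
    (ξ : ℝ) :
    HasDerivAt (fun ξ ↦ exp ξ * (U ξ + deriv U ξ))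
      (A * log (ν / U ξ) ^ (1 - r) * (exp ξ * U ξ)) ξ :=
  ((hasDerivAt_exp ξ).mul ((hd1 ξ).hasDerivAt.add (hd2 ξ).hasDerivAt)).congr_deriv
    (by simp only [Pi.add_apply]; linear_combination (-exp ξ) * hODE ξ)

lemma mul_log_div_rpow_pos (hA : 0 < A) (hν : 1 ≤ ν) {u : ℝ} (hu0 : 0 < u) (hu1 : u < 1) :
    0 < A * log (ν / u) ^ (1 - r) :=
  mul_pos hA (rpow_pos_of_pos (log_pos ((one_lt_div hu0).2 (hu1.trans_le hν))) _)

lemma tendsto_mul_log_div_rpow_zero (hr : 1 < r) (hν : 0 < ν) (hUpos : ∀ ξ, 0 < U ξ)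
    (hlim : Tendsto U atTop (𝓝 0)) :
    Tendsto (fun ξ ↦ A * log (ν / U ξ) ^ (1 - r)) atTop (𝓝 0) := by
  have hU : Tendsto U atTop (𝓝[>] 0) :=
    tendsto_nhdsWithin_iff.2 ⟨hlim, Eventually.of_forall hUpos⟩
  have hlog : Tendsto (fun ξ ↦ log (ν / U ξ)) atTop atTop :=
    tendsto_log_atTop.comp <| (tendsto_inv_nhdsGT_zero.comp hU).const_mul_atTop hν
  have := ((tendsto_rpow_neg_atTop (y := r - 1) (by linarith)).comp hlog).const_mul A
  simpa using this

lemma eventually_mul_log_div_rpow_le (hA : 0 ≤ A) (hr : 1 < r) (hν : 1 ≤ ν)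
    (hUpos : ∀ ξ, 0 < U ξ) {C : ℝ} (hC : ∀ᶠ ξ in atTop, exp ξ * U ξ ≤ C * exp (1 / 2 * ξ)) :
    ∀ᶠ ξ in atTop, A * log (ν / U ξ) ^ (1 - r) ≤ A * (1 / 4) ^ (1 - r) * ξ ^ (1 - r) := by
  filter_upwards [hC, eventually_gt_atTop 0, eventually_ge_atTop (4 * log C)] with ξ hξC hξ0 hξ
  have hWpos : 0 < exp ξ * U ξ := mul_pos (exp_pos ξ) (hUpos ξ)
  have hCpos : 0 < C := pos_of_mul_pos_left (hWpos.trans_le hξC) (exp_pos _).le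
  have hlogU : ξ + log (U ξ) ≤ log C + 1 / 2 * ξ := by
    simpa [log_mul, (exp_pos _).ne', (hUpos ξ).ne', hCpos.ne'] using log_le_log hWpos hξC
  have hlog : 1 / 4 * ξ ≤ log (ν / U ξ) := by
    rw [log_div (by positivity) (hUpos ξ).ne']
    linarith [log_nonneg hν]
  calc A * log (ν / U ξ) ^ (1 - r) ≤ A * (1 / 4 * ξ) ^ (1 - r) :=
        mul_le_mul_of_nonneg_left (rpow_le_rpow_of_nonpos (by positivity) hlog (by linarith)) hA
    _ = A * (1 / 4) ^ (1 - r) * ξ ^ (1 - r) := by rw [mul_rpow (by norm_num) hξ0.le, mul_assoc]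

end TravelingWave

theorem stmt_1_general (r A : ℝ) (hA : 0 < A) (hr3 : 3 < r)
    (ν : ℝ) (hν : ν = Real.exp (A ^ (-(1 / (r - 1)))))
    (U : ℝ → ℝ) (hUreg : ContDiff ℝ 2 U)
    (hUpos : ∀ ξ : ℝ, 0 < U ξ) (hUlt : ∀ ξ : ℝ, U ξ < 1)
    (hODE : ∀ ξ : ℝ, -2 * deriv U ξ =
      deriv (deriv U) ξ + U ξ * (1 - A * Real.log (ν / U ξ) ^ (1 - r)))
    (hlim_top : Tendsto U atTop (nhds 0)) :
    ∃ κ > (0:ℝ), Tendsto (fun ξ : ℝ => U ξ / (ξ * Real.exp (-ξ))) atTop (nhds κ) := by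
  have hν1 : 1 < ν := hν ▸ one_lt_exp_iff.2 (rpow_pos_of_pos hA _)
  set W : ℝ → ℝ := fun ξ ↦ exp ξ * U ξ
  set W' : ℝ → ℝ := fun ξ ↦ exp ξ * (U ξ + deriv U ξ)
  have hW : ∀ ξ, HasDerivAt W (W' ξ) ξ := fun ξ ↦
    ((hasDerivAt_exp ξ).mul (hUreg.differentiable two_ne_zero ξ).hasDerivAt).congr_deriv
      (by ring)
  have hW' : ∀ ξ, HasDerivAt W' (A * log (ν / U ξ) ^ (1 - r) * W ξ) ξ :=
    hasDerivAt_exp_mul_add_deriv (hUreg.differentiable two_ne_zero)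
      hUreg.differentiable_deriv_two hODE
  have hW0 : ∀ ξ, 0 < W ξ := fun ξ ↦ mul_pos (exp_pos ξ) (hUpos ξ)
  have hmono : StrictMono W' := strictMono_of_hasDerivAt_pos hW' fun ξ ↦
    mul_pos (mul_log_div_rpow_pos hA hν1.le (hUpos ξ) (hUlt ξ)) (hW0 ξ)
  have hP := tendsto_mul_log_div_rpow_zero (A := A) (r := r) (by linarith)
    (zero_lt_one.trans hν1) hUpos hlim_top
  obtain ⟨C, hC⟩ := exists_le_mul_exp_of_le_sq hW hW' (fun ξ ↦ (hW0 ξ).le) one_half_pos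
    (hP.eventually (eventually_le_nhds (by norm_num)))
  have hWbot : Tendsto W atBot (𝓝 0) := squeeze_zero (fun ξ ↦ (hW0 ξ).le)
    (fun ξ ↦ mul_le_of_le_one_right (exp_pos ξ).le (hUlt ξ).le) tendsto_exp_atBot
  obtain ⟨ξ₁, hξ₁⟩ := exists_deriv_nonneg_of_tendsto_atBot hW hW0 hWbot
  have hbdd := bddAbove_range_deriv_of_le_rpow hW hW' (fun ξ ↦ (hW0 ξ).le) hr3
    (mul_nonneg hA.le (rpow_nonneg (by norm_num) _)) hmono.monotone
    (eventually_mul_log_div_rpow_le hA.le (by linarith) hν1.le hUpos hC) ⟨ξ₁, hξ₁⟩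
  refine ⟨⨆ ξ, W' ξ, hξ₁.trans_lt ((hmono (lt_add_one ξ₁)).trans_le (le_ciSup hbdd _)), ?_⟩
  refine (tendsto_div_self_of_hasDerivAt hW (tendsto_atTop_ciSup hmono.monotone hbdd)).congr
    fun ξ ↦ ?_
  rw [exp_neg, div_mul_eq_div_div, div_inv_eq_mul, div_mul_eq_mul_div, mul_comm]

/-- decay of the traveling wave when r > 3. -/
theorem stmt_1 (r A : ℝ) (hr : 1 < r) (hA : 0 < A) (hr3 : 3 < r)
    (ν : ℝ) (hν : ν = Real.exp (A ^ (-(1 / (r - 1)))))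
    (U : ℝ → ℝ) (hUreg : ContDiff ℝ 2 U)
    (hUpos : ∀ ξ : ℝ, 0 < U ξ) (hUlt : ∀ ξ : ℝ, U ξ < 1)
    (hODE : ∀ ξ : ℝ, -2 * deriv U ξ =
      deriv (deriv U) ξ + U ξ * (1 - A * Real.log (ν / U ξ) ^ (1 - r)))
    (hlim_bot : Tendsto U atBot (nhds 1))
    (hlim_top : Tendsto U atTop (nhds 0)) :
    ∃ κ > (0:ℝ), Tendsto (fun ξ : ℝ => U ξ / (ξ * Real.exp (-ξ))) atTop (nhds κ) :=
  stmt_1_general r A hA hr3 ν hν U hUreg hUpos hUlt hODE hlim_top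
end

section
/- There exists a constant C > 0 such that for all t ≥ 1 and all x ∈ ℝ: (√t)/(C·(x₊+√t))·exp(−x₊²/(4t) − C·x₊/t) ≤ u(t,x) ≤ (C·√t)/(x₊+√t)·exp(t − x₊²/(4t)). -/
/-
`heatFront t x = ∫_{x/√t}^∞ e^{-s²/4} ds` solves the heat equation, and by the Gaussian tail
estimates it is comparable to `√t / (x + √t) · e^{-x²/(4t)}` for `x ≥ 0`. Because
`0 ≤ f(u) ≤ u`, the solution `u` is a supersolution of the heat equation and `e^{-t} u` a
subsolution. The weak maximum principle for functions bounded below then gives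
`e^{-t} u ≤ heatFront / ∫_0^∞ e^{-s²/4} ds`, since `u(0, ·)` vanishes on `[0, ∞)` and `u ≤ 1`, and
`u ≥ B · heatFront(t, x + M)`, since `u(0, ·) ≥ δ` far to the left. Inserting the tail estimates
gives both bounds.
-/

open Real Filter Topology Set MeasureTheory

noncomputable def gauss (s : ℝ) : ℝ := exp (-s ^ 2 / 4)

noncomputable def gaussTail (z : ℝ) : ℝ := ∫ s in Ioi z, gauss s

lemma gauss_pos (s : ℝ) : 0 < gauss s := exp_pos _

lemma gauss_eq_exp_neg_mul_sq (s : ℝ) : gauss s = exp (-(1 / 4) * s ^ 2) := by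
  rw [gauss]; ring_nf

lemma integrable_gauss : Integrable gauss := by
  rw [funext gauss_eq_exp_neg_mul_sq]; exact integrable_exp_neg_mul_sq (by norm_num)

lemma integrable_mul_gauss : Integrable fun s => s * gauss s := by
  simp only [gauss_eq_exp_neg_mul_sq]; exact integrable_mul_exp_neg_mul_sq (by norm_num)

lemma continuous_gauss : Continuous gauss := by
  unfold gauss; fun_prop

lemma hasDerivAt_gauss (s : ℝ) : HasDerivAt gauss (-(s / 2) * gauss s) s := by
  rw [funext gauss_eq_exp_neg_mul_sq]
  convert ((hasDerivAt_pow 2 s).const_mul (-(1 / 4) : ℝ)).exp using 1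
  push_cast; ring

lemma gauss_le_gauss {a b : ℝ} (ha : 0 ≤ a) (hab : a ≤ b) : gauss b ≤ gauss a := by
  unfold gauss; gcongr

lemma tendsto_gauss_atTop : Tendsto gauss atTop (𝓝 0) := by
  refine tendsto_exp_atBot.comp (Tendsto.atBot_div_const (by norm_num) ?_)
  exact tendsto_neg_atTop_atBot.comp (tendsto_pow_atTop two_ne_zero)

lemma gaussTail_antitone : Antitone gaussTail := fun _ _ hab =>
  setIntegral_mono_set integrable_gauss.integrableOn
    (Eventually.of_forall fun s => (gauss_pos s).le) (Ioi_subset_Ioi hab).eventuallyLE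

lemma gaussTail_le_integral (z : ℝ) : gaussTail z ≤ ∫ s, gauss s :=
  setIntegral_le_integral integrable_gauss (Eventually.of_forall fun s => (gauss_pos s).le)

lemma mul_gauss_le_gaussTail {z w : ℝ} (hz : 0 ≤ z) (hw : 0 < w) :
    w * gauss (z + w) ≤ gaussTail z := by
  calc w * gauss (z + w) = ∫ _ in Ioc z (z + w), gauss (z + w) := by
        rw [setIntegral_const, volume_real_Ioc_of_le (by linarith), add_sub_cancel_left,
          smul_eq_mul]
    _ ≤ ∫ s in Ioc z (z + w), gauss s :=
        setIntegral_mono_on (integrable_const _) integrable_gauss.integrableOn measurableSet_Ioc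
          fun s hs => gauss_le_gauss (hz.trans hs.1.le) hs.2
    _ ≤ gaussTail z :=
        setIntegral_mono_set integrable_gauss.integrableOn
          (Eventually.of_forall fun s => (gauss_pos s).le) Ioc_subset_Ioi_self.eventuallyLE

lemma gaussTail_pos (z : ℝ) : 0 < gaussTail z :=
  calc 0 < 1 * gauss (max z 0 + 1) := mul_pos one_pos (gauss_pos _)
    _ ≤ gaussTail (max z 0) := mul_gauss_le_gaussTail (le_max_right _ _) one_pos
    _ ≤ gaussTail z := gaussTail_antitone (le_max_left _ _)

lemma hasDerivAt_gaussTail (z : ℝ) : HasDerivAt gaussTail (-gauss z) z := by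
  have hIic : ∀ w, gaussTail w = (∫ s, gauss s) - ∫ s in Iic w, gauss s := fun w => by
    rw [gaussTail, ← compl_Iic, ← integral_add_compl measurableSet_Iic integrable_gauss]; ring
  have hint : ∀ w, gaussTail w = gaussTail 0 - ∫ s in (0 : ℝ)..w, gauss s := fun w => by
    rw [hIic, hIic, ← intervalIntegral.integral_Iic_sub_Iic integrable_gauss.integrableOn
      integrable_gauss.integrableOn]
    ring
  have hderiv := (intervalIntegral.integral_hasDerivAt_right (a := 0) (b := z)
    integrable_gauss.intervalIntegrable
    (continuous_gauss.stronglyMeasurableAtFilter _ _) continuous_gauss.continuousAt).const_sub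
    (gaussTail 0)
  exact hderiv.congr_of_eventuallyEq (Eventually.of_forall hint)

lemma continuous_gaussTail : Continuous gaussTail :=
  continuous_iff_continuousAt.2 fun z => (hasDerivAt_gaussTail z).continuousAt

/-- Mills' ratio bound: `s * gauss s` is the derivative of `-2 * gauss`. -/
lemma mul_gaussTail_le (z : ℝ) : z * gaussTail z ≤ 2 * gauss z := by
  have hprim : ∫ s in Ioi z, s * gauss s = 2 * gauss z := by
    have hderiv : ∀ s ∈ Ici z, HasDerivAt (fun y => -2 * gauss y) (s * gauss s) s := fun s _ =>
      ((hasDerivAt_gauss s).const_mul (-2 : ℝ)).congr_deriv (by ring)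
    rw [integral_Ioi_of_hasDerivAt_of_tendsto' hderiv integrable_mul_gauss.integrableOn
      (by simpa using tendsto_gauss_atTop.const_mul (-2 : ℝ))]
    ring
  calc z * gaussTail z = ∫ s in Ioi z, z * gauss s := (integral_const_mul z _).symm
    _ ≤ ∫ s in Ioi z, s * gauss s :=
        setIntegral_mono_on (integrable_gauss.integrableOn.const_mul z)
          integrable_mul_gauss.integrableOn measurableSet_Ioi
          fun s hs => mul_le_mul_of_nonneg_right (le_of_lt hs) (gauss_pos s).le
    _ = 2 * gauss z := hprim

lemma exists_add_one_mul_gaussTail_le :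
    ∃ c > 0, ∀ z ≥ 0, (z + 1) * gaussTail z ≤ c * gauss z := by
  have htail0 := gaussTail_pos 0
  refine ⟨4 + 2 * exp (1 / 4) * gaussTail 0, by positivity, fun z hz => ?_⟩
  have hmills := mul_gaussTail_le z
  have hgauss := gauss_pos z
  have htail := gaussTail_pos z
  rcases le_or_gt z 1 with hz1 | hz1
  · have hgauss1 : 1 ≤ exp (1 / 4) * gauss z := by
      rw [gauss, ← exp_add]
      exact one_le_exp (by nlinarith)
    have hanti : gaussTail z ≤ gaussTail 0 := gaussTail_antitone hz
    nlinarith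
  · have h1 : gaussTail z ≤ z * gaussTail z := le_mul_of_one_le_left htail.le hz1.le
    have h2 : 0 ≤ 2 * exp (1 / 4) * gaussTail 0 * gauss z := by positivity
    linarith

lemma exp_mul_gauss_div_le_gaussTail {z : ℝ} (hz : 0 ≤ z) :
    exp (-3 / 4) * gauss z / (z + 1) ≤ gaussTail z := by
  have hw : 0 < 1 / (z + 1) := by positivity
  have hshift : exp (-3 / 4) * gauss z ≤ gauss (z + 1 / (z + 1)) := by
    have hzw : z * (1 / (z + 1)) ≤ 1 := by
      rw [mul_one_div, div_le_one (by linarith)]; linarith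
    have hw1 : 1 / (z + 1) ≤ 1 := by
      rw [div_le_one (by linarith)]; linarith
    rw [gauss, gauss, ← exp_add]
    gcongr
    nlinarith
  rw [div_le_iff₀ (by linarith)]
  calc exp (-3 / 4) * gauss z ≤ gauss (z + 1 / (z + 1)) := hshift
    _ = (1 / (z + 1) * gauss (z + 1 / (z + 1))) * (z + 1) := by field_simp
    _ ≤ gaussTail z * (z + 1) := by gcongr; exact mul_gauss_le_gaussTail hz hw

lemma tendsto_gaussTail_atTop : Tendsto gaussTail atTop (𝓝 0) := by
  obtain ⟨c, -, hc⟩ := exists_add_one_mul_gaussTail_le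
  refine squeeze_zero' (Eventually.of_forall fun z => (gaussTail_pos z).le) ?_
    (by simpa using tendsto_gauss_atTop.const_mul c)
  filter_upwards [eventually_ge_atTop 0] with z hz
  nlinarith [hc z hz, gaussTail_pos z]

structure HasHeatDerivs (v vt vx vxx : ℝ → ℝ → ℝ) : Prop where
  hasDerivAt_t : ∀ t > 0, ∀ x, HasDerivAt (fun s => v s x) (vt t x) t
  hasDerivAt_x : ∀ t > 0, ∀ x, HasDerivAt (v t) (vx t x) x
  hasDerivAt_xx : ∀ t > 0, ∀ x, HasDerivAt (vx t) (vxx t x) x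

namespace HasHeatDerivs

variable {v vt vx vxx w wt wx wxx : ℝ → ℝ → ℝ}

lemma add (hv : HasHeatDerivs v vt vx vxx) (hw : HasHeatDerivs w wt wx wxx) :
    HasHeatDerivs (fun t x => v t x + w t x) (fun t x => vt t x + wt t x)
      (fun t x => vx t x + wx t x) (fun t x => vxx t x + wxx t x) where
  hasDerivAt_t t ht x := (hv.hasDerivAt_t t ht x).add (hw.hasDerivAt_t t ht x)
  hasDerivAt_x t ht x := (hv.hasDerivAt_x t ht x).add (hw.hasDerivAt_x t ht x)
  hasDerivAt_xx t ht x := (hv.hasDerivAt_xx t ht x).add (hw.hasDerivAt_xx t ht x)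

lemma sub (hv : HasHeatDerivs v vt vx vxx) (hw : HasHeatDerivs w wt wx wxx) :
    HasHeatDerivs (fun t x => v t x - w t x) (fun t x => vt t x - wt t x)
      (fun t x => vx t x - wx t x) (fun t x => vxx t x - wxx t x) where
  hasDerivAt_t t ht x := (hv.hasDerivAt_t t ht x).sub (hw.hasDerivAt_t t ht x)
  hasDerivAt_x t ht x := (hv.hasDerivAt_x t ht x).sub (hw.hasDerivAt_x t ht x)
  hasDerivAt_xx t ht x := (hv.hasDerivAt_xx t ht x).sub (hw.hasDerivAt_xx t ht x)

lemma const_mul (hv : HasHeatDerivs v vt vx vxx) (c : ℝ) :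
    HasHeatDerivs (fun t x => c * v t x) (fun t x => c * vt t x)
      (fun t x => c * vx t x) (fun t x => c * vxx t x) where
  hasDerivAt_t t ht x := (hv.hasDerivAt_t t ht x).const_mul c
  hasDerivAt_x t ht x := (hv.hasDerivAt_x t ht x).const_mul c
  hasDerivAt_xx t ht x := (hv.hasDerivAt_xx t ht x).const_mul c

lemma comp_add_const (hv : HasHeatDerivs v vt vx vxx) (a : ℝ) :
    HasHeatDerivs (fun t x => v t (x + a)) (fun t x => vt t (x + a))
      (fun t x => vx t (x + a)) (fun t x => vxx t (x + a)) where
  hasDerivAt_t t ht x := hv.hasDerivAt_t t ht (x + a)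
  hasDerivAt_x t ht x := by simpa using (hv.hasDerivAt_x t ht (x + a)).comp_add_const x a
  hasDerivAt_xx t ht x := by simpa using (hv.hasDerivAt_xx t ht (x + a)).comp_add_const x a

lemma exp_neg_mul (hv : HasHeatDerivs v vt vx vxx) :
    HasHeatDerivs (fun t x => exp (-t) * v t x) (fun t x => exp (-t) * (vt t x - v t x))
      (fun t x => exp (-t) * vx t x) (fun t x => exp (-t) * vxx t x) where
  hasDerivAt_t t ht x :=
    ((hasDerivAt_neg t).exp.mul (hv.hasDerivAt_t t ht x)).congr_deriv (by ring)
  hasDerivAt_x t ht x := (hv.hasDerivAt_x t ht x).const_mul _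
  hasDerivAt_xx t ht x := (hv.hasDerivAt_xx t ht x).const_mul _

end HasHeatDerivs

lemma hasHeatDerivs_quadratic :
    HasHeatDerivs (fun t x => 1 + x ^ 2 + 3 * t) (fun _ _ => 3) (fun _ x => 2 * x)
      (fun _ _ => 2) where
  hasDerivAt_t t _ x := by simpa using ((hasDerivAt_id t).const_mul 3).const_add (1 + x ^ 2)
  hasDerivAt_x t _ x := by
    simpa using ((hasDerivAt_pow 2 x).const_add 1).add_const (3 * t)
  hasDerivAt_xx _ _ x := by simpa using (hasDerivAt_id x).const_mul 2

/-- The self-similar solution of the heat equation with initial datum `2√π · 1_{x < 0}`. -/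
noncomputable def heatFront (t x : ℝ) : ℝ := gaussTail (x / √t)

lemma hasHeatDerivs_heatFront :
    HasHeatDerivs heatFront (fun t x => x / (2 * t * √t) * gauss (x / √t))
      (fun t x => -gauss (x / √t) / √t) (fun t x => x / (2 * t * √t) * gauss (x / √t)) where
  hasDerivAt_t t ht x := by
    have hs := sqrt_pos.2 ht
    have hdiv : HasDerivAt (fun s => x / √s) (-(x / (2 * t * √t))) t :=
      ((hasDerivAt_const t x).div (hasDerivAt_sqrt ht.ne') hs.ne').congr_deriv (by
        rw [sq_sqrt ht.le]; field_simp; ring)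
    exact ((hasDerivAt_gaussTail _).comp t hdiv).congr_deriv (by ring)
  hasDerivAt_x t _ x :=
    ((hasDerivAt_gaussTail _).comp x ((hasDerivAt_id x).div_const √t)).congr_deriv (by
      simp [div_eq_mul_inv])
  hasDerivAt_xx t ht x := by
    have hs := sqrt_pos.2 ht
    refine (((hasDerivAt_gauss _).comp x ((hasDerivAt_id x).div_const √t)).neg.div_const
      √t).congr_deriv ?_
    field_simp
    rw [sq_sqrt ht.le, id]; ring

lemma continuousOn_heatFront : ContinuousOn ↿heatFront (Ioi 0 ×ˢ univ) :=
  continuous_gaussTail.comp_continuousOn <| continuousOn_snd.div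
    (continuous_sqrt.comp continuous_fst).continuousOn fun _ hp => (sqrt_pos.2 hp.1).ne'

lemma heatFront_pos (t x : ℝ) : 0 < heatFront t x := gaussTail_pos _

lemma heatFront_antitone (t : ℝ) : Antitone (heatFront t) := fun _ _ hxy =>
  gaussTail_antitone (div_le_div_of_nonneg_right hxy (sqrt_nonneg t))

lemma tendsto_heatFront_nhdsGT_zero {y : ℝ} (hy : 0 < y) :
    Tendsto (fun t => heatFront t y) (𝓝[>] 0) (𝓝 0) := by
  have hsqrt : Tendsto (fun t : ℝ => √t) (𝓝[>] 0) (𝓝[>] 0) :=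
    tendsto_nhdsWithin_iff.2 ⟨(continuous_sqrt.tendsto' 0 0 sqrt_zero).mono_left
      nhdsWithin_le_nhds, eventually_mem_nhdsWithin.mono fun t ht => sqrt_pos.2 ht⟩
  refine tendsto_gaussTail_atTop.comp ?_
  simpa only [div_eq_mul_inv, Function.comp_def] using
    (tendsto_inv_nhdsGT_zero.comp hsqrt).const_mul_atTop hy

lemma gauss_div_sqrt {t : ℝ} (ht : 0 ≤ t) (x : ℝ) : gauss (x / √t) = exp (-x ^ 2 / (4 * t)) := by
  rw [gauss, div_pow, sq_sqrt ht]
  ring_nf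

lemma div_sqrt_add_one {t : ℝ} (ht : 0 < t) (x : ℝ) : x / √t + 1 = (x + √t) / √t := by
  field_simp [(sqrt_pos.2 ht).ne']

lemma exists_heatFront_le :
    ∃ c > 0, ∀ t > 0, ∀ x ≥ 0, heatFront t x ≤ c * √t / (x + √t) * exp (-x ^ 2 / (4 * t)) := by
  obtain ⟨c, hc, hbound⟩ := exists_add_one_mul_gaussTail_le
  refine ⟨c, hc, fun t ht x hx => ?_⟩
  have hs := sqrt_pos.2 ht
  have h := hbound (x / √t) (by positivity)
  rw [div_sqrt_add_one ht, gauss_div_sqrt ht.le, div_mul_eq_mul_div,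
    div_le_iff₀' (by positivity)] at h
  rw [heatFront, div_mul_eq_mul_div, le_div_iff₀ (by positivity)]
  linarith

lemma le_heatFront {t x : ℝ} (ht : 0 < t) (hx : 0 ≤ x) :
    exp (-3 / 4) * √t / (x + √t) * exp (-x ^ 2 / (4 * t)) ≤ heatFront t x := by
  have hs := sqrt_pos.2 ht
  have h := exp_mul_gauss_div_le_gaussTail (z := x / √t) (by positivity)
  rw [div_sqrt_add_one ht, gauss_div_sqrt ht.le] at h
  calc exp (-3 / 4) * √t / (x + √t) * exp (-x ^ 2 / (4 * t))
      = exp (-3 / 4) * exp (-x ^ 2 / (4 * t)) / ((x + √t) / √t) := by field_simp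
    _ ≤ heatFront t x := h

lemma le_heatFront_add {t y M : ℝ} (ht : 1 ≤ t) (hy : 0 ≤ y) (hM : 0 ≤ M) :
    exp (-3 / 4) * exp (-M ^ 2 / 4) / (1 + M) * (√t / (y + √t))
        * exp (-y ^ 2 / (4 * t) - M / 2 * y / t) ≤ heatFront t (y + M) := by
  have ht0 : 0 < t := by linarith
  have hs1 : 1 ≤ √t := by simpa using sqrt_le_sqrt ht
  have hexp : exp (-(y + M) ^ 2 / (4 * t))
      = exp (-y ^ 2 / (4 * t) - M / 2 * y / t) * exp (-M ^ 2 / (4 * t)) := by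
    rw [← exp_add]; congr 1; field_simp; ring
  have hfrac : exp (-M ^ 2 / 4) / ((1 + M) * (y + √t)) ≤ exp (-M ^ 2 / (4 * t)) / (y + M + √t) := by
    refine div_le_div₀ (exp_pos _).le (exp_le_exp.2 ?_) (by positivity) (by nlinarith)
    rw [neg_div, neg_div, neg_le_neg_iff]
    exact div_le_div_of_nonneg_left (sq_nonneg M) (by norm_num) (by linarith)
  calc exp (-3 / 4) * exp (-M ^ 2 / 4) / (1 + M) * (√t / (y + √t))
        * exp (-y ^ 2 / (4 * t) - M / 2 * y / t)
      = exp (-3 / 4) * √t * exp (-y ^ 2 / (4 * t) - M / 2 * y / t)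
          * (exp (-M ^ 2 / 4) / ((1 + M) * (y + √t))) := by
        simp only [div_eq_mul_inv, mul_inv]; ring
    _ ≤ exp (-3 / 4) * √t * exp (-y ^ 2 / (4 * t) - M / 2 * y / t)
          * (exp (-M ^ 2 / (4 * t)) / (y + M + √t)) := by gcongr
    _ = exp (-3 / 4) * √t / (y + M + √t) * exp (-(y + M) ^ 2 / (4 * t)) := by
        rw [hexp]; ring
    _ ≤ heatFront t (y + M) := le_heatFront ht0 (by positivity)

lemma HasDerivAt.nonpos_of_isMinOn_Icc {G : ℝ → ℝ} {d a s : ℝ} (hG : HasDerivAt G d s)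
    (has : a < s) (hmin : IsMinOn G (Icc a s) s) : d ≤ 0 := by
  have hcone : a - s ∈ posTangentConeAt (Icc a s) s :=
    sub_mem_posTangentConeAt_of_segment_subset (by rw [segment_symm, segment_eq_Icc has.le])
  have h := hmin.localize.hasFDerivWithinAt_nonneg hG.hasDerivWithinAt.hasFDerivWithinAt hcone
  rw [ContinuousLinearMap.toSpanSingleton_apply, smul_eq_mul] at h
  nlinarith

/-- If `F'' y < 0`, the second derivative test makes `y` also a local maximum, so `F` is locally
constant and `F'' y = 0`. -/
lemma IsLocalMin.nonneg_of_hasDerivAt_deriv {F F' : ℝ → ℝ} {D y : ℝ} (hmin : IsLocalMin F y)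
    (hF : ∀ᶠ x in 𝓝 y, HasDerivAt F (F' x) x) (hF' : HasDerivAt F' D y) : 0 ≤ D := by
  have hderiv : deriv F =ᶠ[𝓝 y] F' := hF.mono fun x hx => hx.deriv
  have hD : deriv (deriv F) y = D := (hF'.congr_of_eventuallyEq hderiv).deriv
  by_contra! hneg
  have hFy := hF.self_of_nhds
  have hmax : IsLocalMax F y := isLocalMax_of_deriv_deriv_neg (hD ▸ hneg)
    (hderiv.eq_of_nhds.trans (hmin.hasDerivAt_eq_zero hFy)) hFy.continuousAt
  have hconst : F =ᶠ[𝓝 y] fun _ => F y := (hmin.and hmax).mono fun x hx => le_antisymm hx.2 hx.1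
  have hderiv0 : deriv F =ᶠ[𝓝 y] fun _ => 0 :=
    hconst.eventuallyEq_nhds.mono fun x hx => by rw [hx.deriv_eq, deriv_const]
  rw [hderiv0.deriv_eq, deriv_const] at hD
  linarith

namespace HasHeatDerivs

variable {v vt vx vxx : ℝ → ℝ → ℝ}

theorem nonneg_of_parabolic_boundary (hv : HasHeatDerivs v vt vx vxx) {a T R : ℝ} (ha : 0 < a)
    (hc : ContinuousOn ↿v (Icc a T ×ˢ Icc (-R) R))
    (hstrict : ∀ t ∈ Ioc a T, ∀ x ∈ Ioo (-R) R, vxx t x < vt t x)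
    (hbot : ∀ x ∈ Icc (-R) R, 0 ≤ v a x) (hside : ∀ t ∈ Icc a T, 0 ≤ v t (-R) ∧ 0 ≤ v t R) :
    ∀ t ∈ Icc a T, ∀ x ∈ Icc (-R) R, 0 ≤ v t x := by
  intro t₀ ht₀ x₀ hx₀
  by_contra! hneg
  obtain ⟨⟨s, y⟩, ⟨hs, hy⟩, hmin⟩ :=
    (isCompact_Icc.prod isCompact_Icc).exists_isMinOn ⟨(t₀, x₀), ht₀, hx₀⟩ hc
  have hvsy : v s y < 0 := lt_of_le_of_lt (hmin (show (t₀, x₀) ∈ _ from ⟨ht₀, hx₀⟩)) hneg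
  have has : a < s := hs.1.lt_of_ne (by rintro rfl; exact (hbot y hy).not_gt hvsy)
  have hyR : y ∈ Ioo (-R) R :=
    ⟨hy.1.lt_of_ne (by rintro rfl; exact (hside s hs).1.not_gt hvsy),
      hy.2.lt_of_ne (by rintro rfl; exact (hside s hs).2.not_gt hvsy)⟩
  have hspos : 0 < s := ha.trans has
  have htime : vt s y ≤ 0 :=
    (hv.hasDerivAt_t s hspos y).nonpos_of_isMinOn_Icc has fun τ hτ =>
      hmin (show (τ, y) ∈ _ from ⟨⟨hτ.1, hτ.2.trans hs.2⟩, hy⟩)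
  have hspace : 0 ≤ vxx s y := by
    refine IsLocalMin.nonneg_of_hasDerivAt_deriv ?_
      (Eventually.of_forall (hv.hasDerivAt_x s hspos)) (hv.hasDerivAt_xx s hspos y)
    filter_upwards [Icc_mem_nhds hyR.1 hyR.2] with x hx using hmin (show (s, x) ∈ _ from ⟨hs, hx⟩)
  exact (hstrict s ⟨has, hs.2⟩ y hyR).not_ge (htime.trans hspace)

/-- The penalty `ε (1 + x² + 3t)` makes the supersolution strict and dominates it for `|x|`
large. -/
theorem nonneg_of_supersolution (hv : HasHeatDerivs v vt vx vxx)
    (hc : ContinuousOn ↿v (Ioi 0 ×ˢ univ)) (hsuper : ∀ t > 0, ∀ x, vxx t x ≤ vt t x)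
    {B : ℝ} (hbdd : ∀ t > 0, ∀ x, -B ≤ v t x)
    (hinit : ∀ ε > 0, ∀ R, ∀ᶠ t in 𝓝[>] 0, ∀ x ∈ Icc (-R) R, -ε ≤ v t x) :
    ∀ t > 0, ∀ x, 0 ≤ v t x := by
  intro t₀ ht₀ x₀
  have hP : 0 < 1 + x₀ ^ 2 + 3 * t₀ := by positivity
  suffices h : ∀ ε > 0, 0 ≤ v t₀ x₀ + ε * (1 + x₀ ^ 2 + 3 * t₀) by
    refine le_of_forall_pos_le_add fun ε hε => ?_
    have := h (ε / (1 + x₀ ^ 2 + 3 * t₀)) (by positivity)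
    rwa [div_mul_cancel₀ _ hP.ne'] at this
  intro ε hε
  set R := |x₀| + |B| / ε + 1
  have hBε : 0 ≤ |B| / ε := by positivity
  have hx₀R : x₀ ∈ Icc (-R) R := abs_le.1 (by linarith)
  have hBR : |B| ≤ ε * R ^ 2 := by
    have : |B| / ε ≤ R ^ 2 := by nlinarith [abs_nonneg x₀, hBε]
    rwa [div_le_iff₀ hε, mul_comm] at this
  obtain ⟨a, hbot, ha⟩ := ((hinit ε hε R).and (Ioo_mem_nhdsGT ht₀)).exists
  have hw := hv.add (hasHeatDerivs_quadratic.const_mul ε)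
  refine hw.nonneg_of_parabolic_boundary ha.1 ?_ ?_ ?_ ?_ t₀ ⟨ha.2.le, le_rfl⟩ x₀ hx₀R
  · refine (hc.mono ?_).add (Continuous.continuousOn (by fun_prop))
    exact prod_mono (fun t ht => ha.1.trans_le ht.1) (subset_univ _)
  · intro t ht x _
    linarith [hsuper t (ha.1.trans ht.1) x]
  · intro x hx
    nlinarith [hbot x hx, sq_nonneg x]
  · intro t ht
    have ht0 : 0 < t := ha.1.trans_le ht.1
    constructor <;> nlinarith [hbdd t ht0 (-R), hbdd t ht0 R, le_abs_self B]

end HasHeatDerivs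

lemma ContinuousOn.eventually_forall_abs_sub_lt {u : ℝ → ℝ → ℝ}
    (hu : ContinuousOn ↿u (Ici 0 ×ˢ univ)) {ε : ℝ} (hε : 0 < ε) (R : ℝ) :
    ∀ᶠ t in 𝓝[>] 0, ∀ x ∈ Icc (-R) R, |u t x - u 0 x| < ε := by
  obtain ⟨V, hV, hclose⟩ := isCompact_Icc.mem_uniformity_of_prod
    (hu.mono (prod_mono subset_rfl (subset_univ (Icc (-R) R)))) self_mem_Ici
    (Metric.dist_mem_uniformity hε)
  exact Filter.mem_of_superset (nhdsWithin_mono _ Ioi_subset_Ici_self hV)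
    fun t ht x hx => hclose t ht x hx

lemma exists_forall_le_of_liminf_pos {φ : ℝ → ℝ} (hφ : ∀ x, 0 ≤ φ x)
    (h : 0 < liminf φ atBot) : ∃ δ > 0, ∃ M, ∀ x ≤ M, δ ≤ φ x := by
  obtain ⟨M, hM⟩ := eventually_atBot.1 <|
    eventually_lt_of_lt_liminf (half_lt_self h) (isBoundedUnder_of ⟨0, hφ⟩)
  exact ⟨_, half_pos h, M, fun x hx => (hM x hx).le⟩

structure IsClassicalSolution (f : ℝ → ℝ) (u : ℝ → ℝ → ℝ) : Prop where
  continuousOn : ContinuousOn ↿u (Ici 0 ×ˢ univ)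
  mem_Icc : ∀ t ≥ (0 : ℝ), ∀ x, u t x ∈ Icc (0 : ℝ) 1
  contDiffOn_time : ∀ x, ContDiffOn ℝ 1 (fun t => u t x) (Ioi 0)
  contDiff_space : ∀ t > (0 : ℝ), ContDiff ℝ 2 (u t)
  deriv_time : ∀ t > (0 : ℝ), ∀ x, deriv (fun s => u s x) t = deriv (deriv (u t)) x + f (u t x)

namespace IsClassicalSolution

variable {f : ℝ → ℝ} {u : ℝ → ℝ → ℝ}

lemma hasHeatDerivs (hu : IsClassicalSolution f u) :
    HasHeatDerivs u (fun t x => deriv (fun s => u s x) t) (fun t x => deriv (u t) x)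
      (fun t x => deriv (deriv (u t)) x) where
  hasDerivAt_t t ht x := (((hu.contDiffOn_time x).differentiableOn one_ne_zero).differentiableAt
    (Ioi_mem_nhds ht)).hasDerivAt
  hasDerivAt_x t ht x := ((hu.contDiff_space t ht).differentiable two_ne_zero x).hasDerivAt
  hasDerivAt_xx t ht x := by
    have h := hu.contDiff_space t ht
    rw [show (2 : WithTop ℕ∞) = 1 + 1 by norm_num, contDiff_succ_iff_deriv] at h
    exact (h.2.2.differentiable one_ne_zero x).hasDerivAt

lemma continuousOn_Ioi (hu : IsClassicalSolution f u) : ContinuousOn ↿u (Ioi 0 ×ˢ univ) :=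
  hu.continuousOn.mono (prod_mono Ioi_subset_Ici_self subset_rfl)

lemma exp_neg_mul_le (hu : IsClassicalSolution f u) {t : ℝ} (ht : 0 ≤ t) (x : ℝ) :
    exp (-t) * u t x ≤ u t x :=
  mul_le_of_le_one_left (hu.mem_Icc t ht x).1 (exp_le_one_iff.2 (by linarith))

/-- Since `f u ≤ u`, `e^{-t} u` is a subsolution of the heat equation. -/
theorem exp_neg_mul_le_heatFront (hu : IsClassicalSolution f u)
    (hf : ∀ s ∈ Icc (0 : ℝ) 1, f s ≤ s) (hinit : ∀ x ≥ (0 : ℝ), u 0 x = 0) :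
    ∀ t > 0, ∀ x, exp (-t) * u t x ≤ (gaussTail 0)⁻¹ * heatFront t x := by
  suffices h : ∀ t > 0, ∀ x, 0 ≤ (gaussTail 0)⁻¹ * heatFront t x - exp (-t) * u t x from
    fun t ht x => sub_nonneg.1 (h t ht x)
  have hA : 0 < (gaussTail 0)⁻¹ := inv_pos.2 (gaussTail_pos 0)
  refine ((hasHeatDerivs_heatFront.const_mul _).sub
    hu.hasHeatDerivs.exp_neg_mul).nonneg_of_supersolution (B := 1) ?_ ?_ ?_ ?_
  · exact (continuousOn_const.mul continuousOn_heatFront).sub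
      ((continuous_exp.comp continuous_fst.neg).continuousOn.mul hu.continuousOn_Ioi)
  · intro t ht x
    have := mul_le_mul_of_nonneg_left (hf _ (hu.mem_Icc t ht.le x)) (exp_pos (-t)).le
    rw [hu.deriv_time t ht x]
    linarith
  · intro t ht x
    have := mul_pos hA (heatFront_pos t x)
    linarith [hu.exp_neg_mul_le ht.le x, (hu.mem_Icc t ht.le x).2]
  · intro ε hε R
    filter_upwards [hu.continuousOn.eventually_forall_abs_sub_lt hε R, self_mem_nhdsWithin]
      with t hclose ht x hx
    have hpos := mul_pos hA (heatFront_pos t x)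
    have hexp := hu.exp_neg_mul_le (le_of_lt ht) x
    rcases le_or_gt x 0 with hx0 | hx0
    · have h1 : 1 ≤ (gaussTail 0)⁻¹ * heatFront t x := by
        rw [inv_mul_eq_div, le_div_iff₀ (gaussTail_pos 0), one_mul]
        simpa [heatFront] using heatFront_antitone t hx0
      linarith [(hu.mem_Icc t (le_of_lt ht) x).2]
    · have h2 := (abs_lt.1 (hclose x hx)).2
      rw [hinit x hx0.le, sub_zero] at h2
      linarith

/-- Since `f u ≥ 0`, `u` is a supersolution of the heat equation. -/
theorem exists_mul_heatFront_le (hu : IsClassicalSolution f u)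
    (hf : ∀ s ∈ Icc (0 : ℝ) 1, 0 ≤ f s) {δ M₀ : ℝ} (hδ : 0 < δ)
    (hinit : ∀ x ≤ M₀, δ ≤ u 0 x) :
    ∃ B > 0, ∃ M ≥ 0, ∀ t > 0, ∀ x, B * heatFront t (x + M) ≤ u t x := by
  set B := δ / (2 * ∫ s, gauss s)
  have hint : 0 < ∫ s, gauss s := (gaussTail_pos 0).trans_le (gaussTail_le_integral 0)
  have hB : 0 < B := by positivity
  have hBle : ∀ t x, B * heatFront t x ≤ δ / 2 := fun t x => by
    calc B * heatFront t x ≤ B * ∫ s, gauss s := by gcongr; exact gaussTail_le_integral _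
      _ = δ / 2 := by simp only [B]; field_simp
  set M := max (1 - M₀) 0
  refine ⟨B, hB, M, le_max_right _ _, ?_⟩
  suffices h : ∀ t > 0, ∀ x, 0 ≤ u t x - B * heatFront t (x + M) from
    fun t ht x => sub_nonneg.1 (h t ht x)
  refine (hu.hasHeatDerivs.sub ((hasHeatDerivs_heatFront.comp_add_const M).const_mul
    B)).nonneg_of_supersolution (B := δ / 2) ?_ ?_ ?_ ?_
  · exact hu.continuousOn_Ioi.sub (continuousOn_const.mul (continuousOn_heatFront.comp
      (continuous_fst.prodMk (continuous_snd.add continuous_const)).continuousOn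
      fun p hp => ⟨hp.1, trivial⟩))
  · intro t ht x
    have := hf _ (hu.mem_Icc t ht.le x)
    rw [hu.deriv_time t ht x]
    linarith
  · intro t ht x
    linarith [hBle t (x + M), (hu.mem_Icc t ht.le x).1]
  · intro ε hε R
    have hsmall : ∀ᶠ t in 𝓝[>] 0, B * heatFront t 1 < ε := by
      simpa using ((tendsto_heatFront_nhdsGT_zero one_pos).const_mul B).eventually_lt_const
        (by simpa using hε)
    filter_upwards [hu.continuousOn.eventually_forall_abs_sub_lt (half_pos hδ) R, hsmall,
      self_mem_nhdsWithin] with t hclose hsmall ht x hx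
    have hu0 := (hu.mem_Icc t (le_of_lt ht) x).1
    rcases le_or_gt x M₀ with hxM | hxM
    · linarith [(abs_lt.1 (hclose x hx)).1, hinit x hxM, hBle t (x + M)]
    · have h1 : heatFront t (x + M) ≤ heatFront t 1 :=
        heatFront_antitone t (by linarith [le_max_left (1 - M₀) 0])
      nlinarith

theorem exists_upper_bound (hu : IsClassicalSolution f u)
    (hf : ∀ s ∈ Icc (0 : ℝ) 1, f s ≤ s) (hinit : ∀ x ≥ (0 : ℝ), u 0 x = 0) :
    ∃ C₀ > 0, ∀ C ≥ C₀, ∀ t > 0, ∀ x,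
      u t x ≤ C * √t / (max x 0 + √t) * exp (t - (max x 0) ^ 2 / (4 * t)) := by
  obtain ⟨c, hc, hfront⟩ := exists_heatFront_le
  have hA : 0 < (gaussTail 0)⁻¹ := inv_pos.2 (gaussTail_pos 0)
  refine ⟨(gaussTail 0)⁻¹ * c, by positivity, fun C hC t ht x => ?_⟩
  set y := max x 0
  have hs := sqrt_pos.2 ht
  have hbarrier : u t x ≤ (gaussTail 0)⁻¹ * exp t * heatFront t y := by
    rcases le_total x 0 with hx | hx
    · have h0 : (gaussTail 0)⁻¹ * heatFront t 0 = 1 := by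
        simp [heatFront, (gaussTail_pos 0).ne']
      have := one_le_exp ht.le
      rw [show y = 0 from max_eq_right hx]
      nlinarith [(hu.mem_Icc t ht.le x).2]
    · have h := hu.exp_neg_mul_le_heatFront hf hinit t ht x
      rw [show y = x from max_eq_left hx]
      calc u t x = exp t * (exp (-t) * u t x) := by rw [← mul_assoc, ← exp_add]; simp
        _ ≤ exp t * ((gaussTail 0)⁻¹ * heatFront t x) := by gcongr
        _ = _ := by ring
  calc u t x ≤ (gaussTail 0)⁻¹ * exp t * heatFront t y := hbarrier
    _ ≤ (gaussTail 0)⁻¹ * exp t * (c * √t / (y + √t) * exp (-y ^ 2 / (4 * t))) := by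
        gcongr; exact hfront t ht y (le_max_right x 0)
    _ = (gaussTail 0)⁻¹ * c * √t / (y + √t) * exp (t - y ^ 2 / (4 * t)) := by
        rw [sub_eq_add_neg, exp_add, neg_div]; ring
    _ ≤ C * √t / (y + √t) * exp (t - y ^ 2 / (4 * t)) := by gcongr

theorem exists_lower_bound (hu : IsClassicalSolution f u)
    (hf : ∀ s ∈ Icc (0 : ℝ) 1, 0 ≤ f s) (hinit : 0 < liminf (fun x => u 0 x) atBot) :
    ∃ C₀ > 0, ∀ C ≥ C₀, ∀ t ≥ 1, ∀ x,
      √t / (C * (max x 0 + √t)) * exp (-(max x 0) ^ 2 / (4 * t) - C * max x 0 / t)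
        ≤ u t x := by
  obtain ⟨δ, hδ, M₀, hM₀⟩ :=
    exists_forall_le_of_liminf_pos (fun x => (hu.mem_Icc 0 le_rfl x).1) hinit
  obtain ⟨B, hB, M, hM, hlower⟩ := hu.exists_mul_heatFront_le hf hδ hM₀
  set κ := B * (exp (-3 / 4) * exp (-M ^ 2 / 4) / (1 + M))
  have hκ : 0 < κ := by positivity
  refine ⟨max (1 / κ) (M / 2), lt_max_of_lt_left (by positivity), fun C hC t ht x => ?_⟩
  have hCpos : 0 < C := (lt_max_of_lt_left (by positivity)).trans_le hC
  have ht0 : 0 < t := by linarith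
  set y := max x 0
  calc √t / (C * (y + √t)) * exp (-y ^ 2 / (4 * t) - C * y / t)
      = 1 / C * (√t / (y + √t)) * exp (-y ^ 2 / (4 * t) - C * y / t) := by field_simp
    _ ≤ κ * (√t / (y + √t)) * exp (-y ^ 2 / (4 * t) - M / 2 * y / t) := by
        gcongr
        · exact (one_div_le hκ hCpos).1 (le_of_max_le_left hC)
        · exact le_of_max_le_right hC
    _ = B * (exp (-3 / 4) * exp (-M ^ 2 / 4) / (1 + M) * (√t / (y + √t))
          * exp (-y ^ 2 / (4 * t) - M / 2 * y / t)) := by ring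
    _ ≤ B * heatFront t (y + M) := by gcongr; exact le_heatFront_add ht (le_max_right x 0) hM
    _ ≤ B * heatFront t (x + M) := by gcongr; exact heatFront_antitone t (by simp [y])
    _ ≤ u t x := hlower t ht0 x

end IsClassicalSolution

/-- weak small-time heat-kernel-type bounds on solutions of
reaction-diffusion equations with 0 ≤ f(u) ≤ u and localized initial data. -/
theorem stmt_8 (f : ℝ → ℝ) (hf : ∀ s ∈ Set.Icc (0:ℝ) 1, 0 ≤ f s ∧ f s ≤ s)
    (u : ℝ → ℝ → ℝ)
    (hcont : ContinuousOn (fun p : ℝ × ℝ => u p.1 p.2) (Set.Ici 0 ×ˢ Set.univ))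
    (hrange : ∀ t ≥ (0:ℝ), ∀ x : ℝ, u t x ∈ Set.Icc (0:ℝ) 1)
    (hreg_t : ∀ x : ℝ, ContDiffOn ℝ 1 (fun t => u t x) (Set.Ioi 0))
    (hreg_x : ∀ t > (0:ℝ), ContDiff ℝ 2 (fun x => u t x))
    (hpde : ∀ t > (0:ℝ), ∀ x : ℝ, deriv (fun s => u s x) t =
      deriv (deriv (fun y => u t y)) x + f (u t x))
    (hinit0 : ∀ x ≥ (0:ℝ), u 0 x = 0)
    (hinit_inf : 0 < Filter.liminf (fun x : ℝ => u 0 x) Filter.atBot) :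
    ∃ C > (0:ℝ), ∀ t ≥ (1:ℝ), ∀ x : ℝ,
      Real.sqrt t / (C * (max x 0 + Real.sqrt t))
          * Real.exp (-(max x 0) ^ 2 / (4 * t) - C * max x 0 / t) ≤ u t x ∧
      u t x ≤ C * Real.sqrt t / (max x 0 + Real.sqrt t)
          * Real.exp (t - (max x 0) ^ 2 / (4 * t)) := by
  have hu : IsClassicalSolution f u := ⟨hcont, hrange, hreg_t, hreg_x, hpde⟩
  obtain ⟨C₁, hC₁, hupper⟩ := hu.exists_upper_bound (fun s hs => (hf s hs).2) hinit0
  obtain ⟨C₂, -, hlower⟩ := hu.exists_lower_bound (fun s hs => (hf s hs).1) hinit_inf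
  exact ⟨max C₁ C₂, lt_max_of_lt_left hC₁, fun t ht x =>
    ⟨hlower _ (le_max_right _ _) t ht x, hupper _ (le_max_left _ _) t (by linarith) x⟩⟩
end

section
/- The function Q satisfies Q″(y) = V(y)·Q(y) for all y > 0. Moreover, there exists λ > 0, depending only on A, such that for every continuously differentiable function ψ : (0,∞) → ℝ with compact support contained in (0,∞) satisfying ∫₀^∞ ψ(y)·Q(y) dy = 0, one has ∫₀^∞ (ψ′(y)² + V(y)·ψ(y)²) dy ≥ λ·∫₀^∞ ψ(y)² dy. -/
open Real Filter MeasureTheory Set Topology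

/-!
With `w = Q'/Q = α/y - y/4` one has `V = w' + w²`; this gives `Q'' = V Q` and, after one
integration by parts, `∫ (ψ'² + V ψ²) = ∫ u²` with `u = ψ' - w ψ = Q (ψ/Q)'`.
Orthogonality to `Q` means that `F = ∫_c^y ψ Q` vanishes at both ends of the support of `ψ`.
Integrating by parts against `F` gives `∫ ψ² = -∫ u F/Q ≤ ∫ u² + ¼ ∫ (F/Q)²`, and
`∫ ψ² = ∫ (ψ - 2wF/Q)² - 2 ∫ w' (F/Q)² ≥ ½ ∫ (F/Q)²` because `-w' = α/y² + 1/4 ≥ 1/4`.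
Together, `½ ∫ ψ² ≤ ∫ u²`.
-/

section IntervalEstimates

variable {Q w w' ψ F : ℝ → ℝ} {c d κ : ℝ}

theorem intervalIntegral_eq_zero_of_hasDerivAt {f g : ℝ → ℝ} (hcd : c ≤ d)
    (hf : ∀ y ∈ Icc c d, HasDerivAt f (g y) y) (hg : ContinuousOn g (Icc c d))
    (hfc : f c = 0) (hfd : f d = 0) : ∫ y in c..d, g y = 0 := by
  rw [intervalIntegral.integral_eq_sub_of_hasDerivAt (by rwa [uIcc_of_le hcd])
    (hg.intervalIntegrable_of_Icc hcd), hfc, hfd, sub_zero]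

theorem integral_sq_deriv_add_mul_sq_eq (hcd : c ≤ d)
    (hw : ∀ y ∈ Icc c d, HasDerivAt w (w' y) y) (hw' : ContinuousOn w' (Icc c d))
    (hψ : ContDiff ℝ 1 ψ) (hψc : ψ c = 0) (hψd : ψ d = 0) :
    ∫ y in c..d, (deriv ψ y ^ 2 + (w' y + w y ^ 2) * ψ y ^ 2) =
      ∫ y in c..d, (deriv ψ y - w y * ψ y) ^ 2 := by
  have hwcont : ContinuousOn w (Icc c d) :=
    continuousOn_of_forall_continuousAt fun y hy => (hw y hy).continuousAt
  have hψ'cont := hψ.continuous_deriv le_rfl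
  have hψcont := hψ.continuous
  have hboundary : ∫ y in c..d, (w' y * ψ y ^ 2 + w y * (2 * ψ y * deriv ψ y)) = 0 := by
    refine intervalIntegral_eq_zero_of_hasDerivAt (f := fun y => w y * ψ y ^ 2) hcd
      (fun y hy => ?_) (by fun_prop) (by simp [hψc]) (by simp [hψd])
    refine ((hw y hy).mul ((hψ.differentiable one_ne_zero y).hasDerivAt.pow 2)).congr_deriv ?_
    simp only [Pi.pow_apply]; push_cast; ring
  calc ∫ y in c..d, (deriv ψ y ^ 2 + (w' y + w y ^ 2) * ψ y ^ 2)
      = ∫ y in c..d, ((deriv ψ y - w y * ψ y) ^ 2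
          + (w' y * ψ y ^ 2 + w y * (2 * ψ y * deriv ψ y))) :=
        intervalIntegral.integral_congr fun y _ => by ring
    _ = ∫ y in c..d, (deriv ψ y - w y * ψ y) ^ 2 := by
        rw [intervalIntegral.integral_add ((ContinuousOn.intervalIntegrable_of_Icc hcd
          (by fun_prop))) (ContinuousOn.intervalIntegrable_of_Icc hcd (by fun_prop)),
          hboundary, add_zero]

theorem integral_sq_le_integral_sq_add_quarter_mul (hcd : c ≤ d)
    (hQ : ∀ y ∈ Icc c d, HasDerivAt Q (w y * Q y) y) (hQ0 : ∀ y ∈ Icc c d, Q y ≠ 0)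
    (hw : ContinuousOn w (Icc c d)) (hψ : ContDiff ℝ 1 ψ) (hψc : ψ c = 0) (hψd : ψ d = 0)
    (hF : ∀ y ∈ Icc c d, HasDerivAt F (ψ y * Q y) y) :
    ∫ y in c..d, ψ y ^ 2 ≤
      (∫ y in c..d, (deriv ψ y - w y * ψ y) ^ 2) + 1 / 4 * ∫ y in c..d, (F y / Q y) ^ 2 := by
  have hQcont : ContinuousOn Q (Icc c d) :=
    continuousOn_of_forall_continuousAt fun y hy => (hQ y hy).continuousAt
  have hFcont : ContinuousOn F (Icc c d) :=
    continuousOn_of_forall_continuousAt fun y hy => (hF y hy).continuousAt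
  have hψ'cont := hψ.continuous_deriv le_rfl
  have hψcont := hψ.continuous
  set u := fun y => deriv ψ y - w y * ψ y
  -- `(ψ / Q)' = u / Q`, so `(ψ / Q * F)' = u * (F / Q) + ψ ^ 2`
  have hboundary : ∫ y in c..d, (u y * (F y / Q y) + ψ y ^ 2) = 0 := by
    refine intervalIntegral_eq_zero_of_hasDerivAt (f := fun y => ψ y / Q y * F y) hcd
      (fun y hy => ?_) (by fun_prop (disch := assumption)) (by simp [hψc]) (by simp [hψd])
    refine (((hψ.differentiable one_ne_zero y).hasDerivAt.div (hQ y hy) (hQ0 y hy)).mul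
      (hF y hy)).congr_deriv ?_
    have := hQ0 y hy
    simp only [u, Pi.div_apply]
    field_simp
  have hint : ∀ {f : ℝ → ℝ}, ContinuousOn f (Icc c d) → IntervalIntegrable f volume c d :=
    fun hf => hf.intervalIntegrable_of_Icc hcd
  calc ∫ y in c..d, ψ y ^ 2
      ≤ ∫ y in c..d, ((u y * (F y / Q y) + ψ y ^ 2) + (u y ^ 2 + 1 / 4 * (F y / Q y) ^ 2)) :=
        intervalIntegral.integral_mono_on hcd (hint (by fun_prop))
          (hint (by fun_prop (disch := assumption)))
          fun y _ => by nlinarith [sq_nonneg (u y + F y / Q y / 2)]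
    _ = (∫ y in c..d, u y ^ 2) + 1 / 4 * ∫ y in c..d, (F y / Q y) ^ 2 := by
        rw [intervalIntegral.integral_add (hint (by fun_prop (disch := assumption)))
          (hint (by fun_prop (disch := assumption))), hboundary, zero_add,
          intervalIntegral.integral_add (hint (by fun_prop))
          (hint (by fun_prop (disch := assumption))), intervalIntegral.integral_const_mul]

theorem two_mul_integral_sq_div_le_integral_sq (hcd : c ≤ d)
    (hQ : ∀ y ∈ Icc c d, HasDerivAt Q (w y * Q y) y) (hQ0 : ∀ y ∈ Icc c d, Q y ≠ 0)
    (hw : ∀ y ∈ Icc c d, HasDerivAt w (w' y) y) (hw' : ContinuousOn w' (Icc c d))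
    (hκ : ∀ y ∈ Icc c d, κ ≤ -w' y) (hψ : Continuous ψ)
    (hF : ∀ y ∈ Icc c d, HasDerivAt F (ψ y * Q y) y) (hFc : F c = 0) (hFd : F d = 0) :
    2 * κ * ∫ y in c..d, (F y / Q y) ^ 2 ≤ ∫ y in c..d, ψ y ^ 2 := by
  have hQcont : ContinuousOn Q (Icc c d) :=
    continuousOn_of_forall_continuousAt fun y hy => (hQ y hy).continuousAt
  have hwcont : ContinuousOn w (Icc c d) :=
    continuousOn_of_forall_continuousAt fun y hy => (hw y hy).continuousAt
  have hFcont : ContinuousOn F (Icc c d) :=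
    continuousOn_of_forall_continuousAt fun y hy => (hF y hy).continuousAt
  set φ := fun y => F y / Q y
  have hφ : ContinuousOn φ (Icc c d) := by fun_prop (disch := assumption)
  have hφd : ∀ y ∈ Icc c d, HasDerivAt φ (ψ y - w y * φ y) y := fun y hy => by
    refine ((hF y hy).div (hQ y hy) (hQ0 y hy)).congr_deriv ?_
    have := hQ0 y hy
    simp only [φ]
    field_simp
  have hboundary : ∫ y in c..d, (w' y * φ y ^ 2 + w y * (2 * φ y * (ψ y - w y * φ y))) = 0 := by
    refine intervalIntegral_eq_zero_of_hasDerivAt (f := fun y => w y * φ y ^ 2) hcd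
      (fun y hy => ?_) (by fun_prop) (by simp [φ, hFc]) (by simp [φ, hFd])
    refine ((hw y hy).mul ((hφd y hy).pow 2)).congr_deriv ?_
    simp only [Pi.pow_apply]; push_cast; ring
  have hint : ∀ {f : ℝ → ℝ}, ContinuousOn f (Icc c d) → IntervalIntegrable f volume c d :=
    fun hf => hf.intervalIntegrable_of_Icc hcd
  calc 2 * κ * ∫ y in c..d, φ y ^ 2
      = ∫ y in c..d, (2 * κ * φ y ^ 2
          + 2 * (w' y * φ y ^ 2 + w y * (2 * φ y * (ψ y - w y * φ y)))) := by
        rw [intervalIntegral.integral_add (hint (by fun_prop)) (hint (by fun_prop)),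
          intervalIntegral.integral_const_mul, intervalIntegral.integral_const_mul, hboundary,
          mul_zero, add_zero]
    _ ≤ ∫ y in c..d, ψ y ^ 2 :=
        intervalIntegral.integral_mono_on hcd (hint (by fun_prop)) (hint (by fun_prop))
          fun y hy => by
            -- `ψ² - 2κφ² - 2 (w φ²)' = (ψ - 2wφ)² + 2 (-w' - κ) φ²`
            nlinarith [sq_nonneg (ψ y - 2 * w y * φ y),
              mul_nonneg (sub_nonneg.2 (hκ y hy)) (sq_nonneg (φ y))]

theorem half_integral_sq_le_integral_sq_deriv_add_mul_sq (hcd : c ≤ d)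
    (hQ : ∀ y ∈ Icc c d, HasDerivAt Q (w y * Q y) y) (hQ0 : ∀ y ∈ Icc c d, Q y ≠ 0)
    (hw : ∀ y ∈ Icc c d, HasDerivAt w (w' y) y) (hw' : ContinuousOn w' (Icc c d))
    (hw'_le : ∀ y ∈ Icc c d, w' y ≤ -1 / 4)
    (hψ : ContDiff ℝ 1 ψ) (hψc : ψ c = 0) (hψd : ψ d = 0)
    (hF : ∀ y ∈ Icc c d, HasDerivAt F (ψ y * Q y) y) (hFc : F c = 0) (hFd : F d = 0) :
    1 / 2 * ∫ y in c..d, ψ y ^ 2 ≤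
      ∫ y in c..d, (deriv ψ y ^ 2 + (w' y + w y ^ 2) * ψ y ^ 2) := by
  rw [integral_sq_deriv_add_mul_sq_eq hcd hw hw' hψ hψc hψd]
  have hupper := integral_sq_le_integral_sq_add_quarter_mul hcd hQ hQ0
    (continuousOn_of_forall_continuousAt fun y hy => (hw y hy).continuousAt) hψ hψc hψd hF
  have hlower := two_mul_integral_sq_div_le_integral_sq (κ := 1 / 4) hcd hQ hQ0 hw hw'
    (fun y hy => by linarith [hw'_le y hy]) hψ.continuous hF hFc hFd
  linarith

end IntervalEstimates

theorem deriv_deriv_eq_of_hasDerivAt_mul {Q w : ℝ → ℝ} {w' y : ℝ}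
    (hQ : ∀ᶠ t in 𝓝 y, HasDerivAt Q (w t * Q t) t) (hw : HasDerivAt w w' y) :
    deriv (deriv Q) y = (w' + w y ^ 2) * Q y := by
  have hQ' : deriv Q =ᶠ[𝓝 y] fun t => w t * Q t := hQ.mono fun t ht => ht.deriv
  rw [hQ'.deriv_eq]
  exact ((hw.mul hQ.self_of_nhds).congr_deriv (by ring)).deriv

theorem hasDerivAt_rpow_mul_exp_neg_sq {Z α y : ℝ} (hy : 0 < y) :
    HasDerivAt (fun t => Z⁻¹ * t ^ α * exp (-t ^ 2 / 8))
      ((α / y - y / 4) * (Z⁻¹ * y ^ α * exp (-y ^ 2 / 8))) y := by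
  have hpow := (hasDerivAt_rpow_const (p := α) (Or.inl hy.ne')).const_mul Z⁻¹
  have hexp := (((hasDerivAt_pow 2 y).neg.div_const 8).exp)
  refine (hpow.mul hexp).congr_deriv ?_
  simp only [Pi.neg_apply, rpow_sub_one hy.ne']
  field_simp
  ring

theorem exists_hasDerivAt_eq_zero_of_intervalIntegral_eq_zero {f : ℝ → ℝ} (hf : Continuous f)
    {c d : ℝ} (h : ∫ y in c..d, f y = 0) :
    ∃ F : ℝ → ℝ, (∀ y, HasDerivAt F (f y) y) ∧ F c = 0 ∧ F d = 0 :=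
  ⟨fun y => ∫ t in c..y, f t, fun y => (hf.integral_hasStrictDerivAt c y).hasDerivAt,
    intervalIntegral.integral_same, h⟩

theorem IsCompact.exists_subset_Ioo_of_subset_Ioi {K : Set ℝ} (hK : IsCompact K) {a : ℝ}
    (h : K ⊆ Ioi a) : ∃ c d, a < c ∧ c ≤ d ∧ K ⊆ Ioo c d := by
  rcases K.eq_empty_or_nonempty with rfl | hne
  · exact ⟨a + 1, a + 1, by linarith, le_rfl, empty_subset _⟩
  obtain ⟨m, hmK, hm⟩ := hK.exists_isMinOn hne continuousOn_id
  obtain ⟨M, hM⟩ := hK.bddAbove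
  have ham : a < m := h hmK
  refine ⟨(a + m) / 2, M + 1, by linarith, by linarith [hM hmK], fun y hy => ⟨?_, ?_⟩⟩
  · linarith [show m ≤ y from hm hy]
  · linarith [hM hy]

theorem setIntegral_Ioi_eq_intervalIntegral {f : ℝ → ℝ} {a c d : ℝ} (hac : a ≤ c)
    (hcd : c ≤ d) (hf : ∀ y ∉ Ioo c d, f y = 0) :
    ∫ y in Ioi a, f y = ∫ y in c..d, f y := by
  rw [intervalIntegral.integral_of_le hcd]
  exact setIntegral_eq_of_subset_of_forall_sdiff_eq_zero measurableSet_Ioi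
    (fun y hy => hac.trans_lt hy.1) fun y hy => hf y fun h => hy.2 (Ioo_subset_Ioc_self h)

theorem half_setIntegral_sq_le_setIntegral_sq_deriv_add_mul_sq {Q w w' ψ : ℝ → ℝ}
    (hQ : Continuous Q) (hQd : ∀ y > 0, HasDerivAt Q (w y * Q y) y) (hQ0 : ∀ y > 0, Q y ≠ 0)
    (hw : ∀ y > 0, HasDerivAt w (w' y) y) (hw' : ContinuousOn w' (Ioi 0))
    (hw'_le : ∀ y > 0, w' y ≤ -1 / 4) (hψ : ContDiff ℝ 1 ψ) (hψc : HasCompactSupport ψ)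
    (hψsub : tsupport ψ ⊆ Ioi 0) (horth : ∫ y in Ioi 0, ψ y * Q y = 0) :
    1 / 2 * ∫ y in Ioi 0, ψ y ^ 2 ≤
      ∫ y in Ioi 0, (deriv ψ y ^ 2 + (w' y + w y ^ 2) * ψ y ^ 2) := by
  obtain ⟨c, d, hc, hcd, hK⟩ := hψc.exists_subset_Ioo_of_subset_Ioi hψsub
  have hψ0 : ∀ y ∉ Ioo c d, ψ y = 0 := fun y hy =>
    image_eq_zero_of_notMem_tsupport fun h => hy (hK h)
  have hψ'0 : ∀ y ∉ Ioo c d, deriv ψ y = 0 := fun y hy =>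
    Function.notMem_support.mp fun h => hy (hK (support_deriv_subset h))
  have hpos : ∀ y ∈ Icc c d, 0 < y := fun y hy => hc.trans_le hy.1
  rw [setIntegral_Ioi_eq_intervalIntegral hc.le hcd fun y hy => by simp [hψ0 y hy]] at horth
  obtain ⟨F, hF, hFc, hFd⟩ :=
    exists_hasDerivAt_eq_zero_of_intervalIntegral_eq_zero (hψ.continuous.mul hQ) horth
  rw [setIntegral_Ioi_eq_intervalIntegral hc.le hcd fun y hy => by simp [hψ0 y hy],
    setIntegral_Ioi_eq_intervalIntegral hc.le hcd fun y hy => by simp [hψ0 y hy, hψ'0 y hy]]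
  exact half_integral_sq_le_integral_sq_deriv_add_mul_sq hcd (fun y hy => hQd y (hpos y hy))
    (fun y hy => hQ0 y (hpos y hy)) (fun y hy => hw y (hpos y hy)) (hw'.mono hpos)
    (fun y hy => hw'_le y (hpos y hy)) hψ (hψ0 c (by simp)) (hψ0 d (by simp))
    (fun y _ => hF y) hFc hFd

theorem stmt_12_general (A α : ℝ) (hα : 1 < α) (hαA : α * (α - 1) = A)
    (V : ℝ → ℝ) (hV : ∀ y : ℝ, V y = y ^ 2 / 16 + 1 / 4 + A / y ^ 2 - (1 + α) / 2)
    (Z : ℝ) (hZ : 0 < Z)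
    (Q : ℝ → ℝ) (hQ : ∀ y : ℝ, Q y = Z⁻¹ * y ^ α * Real.exp (-y ^ 2 / 8)) :
    (∀ y > (0:ℝ), deriv (deriv Q) y = V y * Q y) ∧
    ∃ lam > (0:ℝ), ∀ ψ : ℝ → ℝ, ContDiff ℝ 1 ψ → HasCompactSupport ψ →
      tsupport ψ ⊆ Set.Ioi 0 →
      (∫ y in Set.Ioi (0:ℝ), ψ y * Q y) = 0 →
      lam * ∫ y in Set.Ioi (0:ℝ), (ψ y) ^ 2 ≤
        ∫ y in Set.Ioi (0:ℝ), ((deriv ψ y) ^ 2 + V y * (ψ y) ^ 2) := by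
  have hQfun : Q = fun y => Z⁻¹ * y ^ α * exp (-y ^ 2 / 8) := funext hQ
  set w : ℝ → ℝ := fun y => α / y - y / 4
  set w' : ℝ → ℝ := fun y => -α / y ^ 2 - 1 / 4
  have hQd : ∀ y > 0, HasDerivAt Q (w y * Q y) y := fun y hy => by
    rw [hQfun]; exact hasDerivAt_rpow_mul_exp_neg_sq hy
  have hwd : ∀ y > 0, HasDerivAt w (w' y) y := fun y hy =>
    (((hasDerivAt_inv hy.ne').const_mul α).sub ((hasDerivAt_id y).div_const 4)).congr_deriv
      (by simp only [w']; ring)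
  have hVw : ∀ y > 0, V y = w' y + w y ^ 2 := fun y hy => by
    simp only [hV, w, w', ← hαA]; field_simp; ring
  have hQc : Continuous Q := by
    rw [hQfun]
    exact (continuous_const.mul (continuous_rpow_const (by linarith))).mul (by fun_prop)
  have hQ0 : ∀ y > 0, Q y ≠ 0 := fun y hy => by
    rw [hQ]; have := rpow_pos_of_pos hy α; positivity
  have hw' : ContinuousOn w' (Ioi 0) := fun y hy => by
    fun_prop (disch := exact pow_ne_zero 2 (ne_of_gt hy))
  have hw'_le : ∀ y > 0, w' y ≤ -1 / 4 := fun y _ => by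
    have : 0 ≤ α / y ^ 2 := div_nonneg (by linarith) (sq_nonneg y)
    simp only [w', neg_div]
    linarith
  refine ⟨fun y hy => ?_, 1 / 2, one_half_pos, fun ψ hψ hψc hψsub horth => ?_⟩
  · rw [hVw y hy]
    exact deriv_deriv_eq_of_hasDerivAt_mul (eventually_gt_nhds hy |>.mono hQd) (hwd y hy)
  refine (half_setIntegral_sq_le_setIntegral_sq_deriv_add_mul_sq hQc hQd hQ0 hwd hw' hw'_le
    hψ hψc hψsub horth).trans_eq (setIntegral_congr_fun measurableSet_Ioi fun y hy => ?_)
  rw [hVw y hy]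

/-- Q is a zero mode of the operator −∂_y² + V, and the operator
has a spectral gap on the orthogonal complement of Q. -/
theorem stmt_12 (A α : ℝ) (hA : 0 < A) (hα : 1 < α) (hαA : α * (α - 1) = A)
    (V : ℝ → ℝ) (hV : ∀ y : ℝ, V y = y ^ 2 / 16 + 1 / 4 + A / y ^ 2 - (1 + α) / 2)
    (Z : ℝ) (hZ : 0 < Z)
    (Q : ℝ → ℝ) (hQ : ∀ y : ℝ, Q y = Z⁻¹ * y ^ α * Real.exp (-y ^ 2 / 8))
    (hnorm : ∫ y in Set.Ioi (0:ℝ), (Q y) ^ 2 = 1) :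
    (∀ y > (0:ℝ), deriv (deriv Q) y = V y * Q y) ∧
    ∃ lam > (0:ℝ), ∀ ψ : ℝ → ℝ, ContDiff ℝ 1 ψ → HasCompactSupport ψ →
      tsupport ψ ⊆ Set.Ioi 0 →
      (∫ y in Set.Ioi (0:ℝ), ψ y * Q y) = 0 →
      lam * ∫ y in Set.Ioi (0:ℝ), (ψ y) ^ 2 ≤
        ∫ y in Set.Ioi (0:ℝ), ((deriv ψ y) ^ 2 + V y * (ψ y) ^ 2) :=
  stmt_12_general A α hα hαA V hV Z hZ Q hQ
end

section
/- There exist p > 0, ε₀ > 0, and a nonincreasing C¹ function h : (0,∞) → ℝ with h(2^{−β}) = 0 and h(τ)/τ → 0 as τ → ∞, such that for every ε ∈ (0, ε₀) the function w(t,x) = ε·(x·t^{−γ})^p·exp(h(t^β) − t^β·Φ(x·t^{−γ})) satisfies, for all t ≥ 1/2 and all x > 0 with x·t^{−γ} ≠ ȳ: 0 < w(t,x) ≤ 1, x + log(1/w(t,x)) > 0, and the subsolution inequality ∂_t w(t,x) ≤ ∂_xx w(t,x) − A·(x + log(1/w(t,x)))^{1−r}·w(t,x). -/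
/-!
Write `w = ε·exp L` with `L = p log y + h(τ) − τ Φ(y)`, `y = x t^{−γ}`, `τ = t^β`. The scaling
relations `γ(1+r) = 2`, `β = 2γ − 1` give `t^{−1} = t^{−2γ} τ` and `x^{1−r} = t^{−2γ} τ² y^{1−r}`,
so `L_x² + L_xx − A x^{1−r} − L_t` is `t^{−2γ}` times a polynomial in `τ` whose `τ²` coefficient is
the ODE for `Φ`, hence vanishes. What remains is `p(p−1)/y² + τ (pγ + βK − 2pΦ′/y − Φ″)` for
`h(τ) = −K log(τ/τ₀)`, and the bounds on `Φ′`, `Φ″` make `2pΦ′/y + Φ″ ≤ C₁(1 + 2p)` once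
`C₁² ≤ 2p`, so `βK = C₁(1 + 2p)` works. Since `log(1/w) ≥ 0` and `1 − r < 0`, the absorption
term `A (x + log(1/w))^{1−r} w` is at most `A x^{1−r} w`.

For `w ≤ 1`: `Φ` is convex, and for large `y` the ODE forces `Φ′(y) > 0` (otherwise
`βΦ(y) ≤ A y^{1−r} → 0`), so `Φ` grows linearly and `y^p e^{−τ₀ Φ(y)}` is bounded; `ε₀` is the
reciprocal of that bound.
-/

open Real Filter

/-- The subsolution ansatz w(t,x) = ε·(x·t^{−γ})^p·exp(h(t^β) − t^β·Φ(x·t^{−γ})). -/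
noncomputable def wFun (Φ : ℝ → ℝ) (γ β p ε : ℝ) (h : ℝ → ℝ) (t x : ℝ) : ℝ :=
  ε * (x * t ^ (-γ)) ^ p * Real.exp (h (t ^ β) - t ^ β * Φ (x * t ^ (-γ)))

open Set Topology
open scoped Nat

theorem monotoneOn_of_deriv_nonneg_off_point {D : Set ℝ} (hD : Convex ℝ D) {g : ℝ → ℝ} {c : ℝ}
    (hg : ContinuousOn g D) (hd : ∀ x ∈ interior D, x ≠ c → DifferentiableAt ℝ g x)
    (hnn : ∀ x ∈ interior D, x ≠ c → 0 ≤ deriv g x) : MonotoneOn g D := by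
  have avoiding : ∀ a ∈ D, ∀ b ∈ D, a ≤ b → c ∉ Ioo a b → g a ≤ g b := by
    intro a ha b hb hab hc
    have hsub : Icc a b ⊆ D := hD.ordConnected.out ha hb
    have hint : ∀ x ∈ interior (Icc a b), x ∈ interior D ∧ x ≠ c := fun x hx =>
      ⟨interior_mono hsub hx, fun h => hc (h ▸ by rwa [interior_Icc] at hx)⟩
    exact monotoneOn_of_deriv_nonneg (convex_Icc a b) (hg.mono hsub)
      (fun x hx => (hd x (hint x hx).1 (hint x hx).2).differentiableWithinAt)
      (fun x hx => hnn x (hint x hx).1 (hint x hx).2) ⟨le_rfl, hab⟩ ⟨hab, le_rfl⟩ hab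
  intro a ha b hb hab
  by_cases hc : c ∈ Ioo a b
  · have hcD : c ∈ D := hD.ordConnected.out ha hb (Ioo_subset_Icc_self hc)
    exact (avoiding a ha c hcD hc.1.le fun h => h.2.false).trans
      (avoiding c hcD b hb hc.2.le fun h => h.1.false)
  · exact avoiding a ha b hb hab hc

theorem convexOn_Ioi_of_deriv2_nonneg_off_point {f : ℝ → ℝ} {c : ℝ}
    (hf : ContDiffOn ℝ 1 f (Ioi 0)) (hf' : ∀ x > 0, x ≠ c → DifferentiableAt ℝ (deriv f) x)
    (hf'' : ∀ x > 0, x ≠ c → 0 ≤ deriv (deriv f) x) : ConvexOn ℝ (Ioi 0) f := by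
  refine MonotoneOn.convexOn_of_deriv (convex_Ioi 0) hf.continuousOn ?_ ?_ <;>
    rw [interior_Ioi]
  · exact hf.differentiableOn one_ne_zero
  · exact monotoneOn_of_deriv_nonneg_off_point (convex_Ioi 0)
      (hf.continuousOn_deriv_of_isOpen isOpen_Ioi le_rfl)
      (fun x hx => by rw [interior_Ioi] at hx; exact hf' x hx)
      (fun x hx => by rw [interior_Ioi] at hx; exact hf'' x hx)

theorem ConvexOn.add_deriv_mul_sub_le {S : Set ℝ} {f : ℝ → ℝ} {x y : ℝ} (hf : ConvexOn ℝ S f)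
    (hx : x ∈ S) (hy : y ∈ S) (hxy : x ≤ y) (hd : DifferentiableAt ℝ f x) :
    f x + deriv f x * (y - x) ≤ f y := by
  rcases hxy.eq_or_lt with rfl | hlt
  · simp
  have := hf.deriv_le_slope hx hy hlt hd
  rw [slope_def_field, le_div_iff₀ (sub_pos.2 hlt)] at this
  linarith

theorem ConvexOn.exists_pos_mul_sub_le {f : ℝ → ℝ} (hf : ConvexOn ℝ (Ioi 0) f)
    (hpos : ∀ y > 0, 0 < f y) (hd : DifferentiableOn ℝ f (Ioi 0))
    (hev : ∀ᶠ y in atTop, 0 < deriv f y) : ∃ a > 0, ∃ b, ∀ y > 0, a * y - b ≤ f y := by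
  obtain ⟨y₁, hd₁, hy₁⟩ := (hev.and (eventually_gt_atTop 0)).exists
  refine ⟨deriv f y₁, hd₁, deriv f y₁ * y₁, fun y hy => ?_⟩
  rcases le_or_gt y₁ y with hle | hlt
  · have := hf.add_deriv_mul_sub_le hy₁ hy hle (hd.differentiableAt (Ioi_mem_nhds hy₁))
    linarith [hpos y₁ hy₁]
  · nlinarith [hpos y hy]

theorem eventually_deriv_pos_of_ode {Φ : ℝ → ℝ} {γ β A r c : ℝ} (hγ : 0 ≤ γ) (hβ : 0 < β)
    (hr : 1 < r) (hc : 0 < c)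
    (hode : ∀ y > 0, deriv Φ y ^ 2 - γ * y * deriv Φ y = A * y ^ (1 - r) - β * Φ y)
    (hlb : ∀ᶠ y in atTop, c ≤ Φ y) : ∀ᶠ y in atTop, 0 < deriv Φ y := by
  have hdecay : Tendsto (fun y : ℝ => A * y ^ (1 - r)) atTop (𝓝 0) := by
    simpa using (tendsto_rpow_neg_atTop (by linarith : 0 < r - 1)).const_mul A
  filter_upwards [hdecay.eventually (gt_mem_nhds (mul_pos hβ hc)), hlb, eventually_gt_atTop 0]
    with y hAy hcy hy
  by_contra! hP
  nlinarith [hode y hy, mul_nonneg (mul_nonneg hγ hy.le) (neg_nonneg.2 hP),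
    mul_le_mul_of_nonneg_left hcy hβ.le]

theorem exists_pos_mul_sub_le_of_ode {Φ : ℝ → ℝ} {γ β A r C c : ℝ} (hγ : 0 ≤ γ) (hβ : 0 < β)
    (hr : 1 < r) (hC : 0 < C) (hΦ : ContDiffOn ℝ 1 Φ (Ioi 0))
    (hΦ' : ∀ y > 0, y ≠ c → DifferentiableAt ℝ (deriv Φ) y)
    (hΦ'' : ∀ y > 0, y ≠ c → 0 ≤ deriv (deriv Φ) y)
    (hode : ∀ y > 0, deriv Φ y ^ 2 - γ * y * deriv Φ y = A * y ^ (1 - r) - β * Φ y)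
    (hlb : ∀ y > 0, min (1 / C) (y ^ 2 / 4) ≤ Φ y) : ∃ a > 0, ∃ b, ∀ y > 0, a * y - b ≤ Φ y := by
  have hpos : ∀ y > 0, 0 < Φ y := fun y hy =>
    (lt_min (by positivity) (by positivity)).trans_le (hlb y hy)
  have hΦ'pos : ∀ᶠ y in atTop, 0 < deriv Φ y :=
    eventually_deriv_pos_of_ode hγ hβ hr (lt_min (one_div_pos.2 hC) one_pos) hode <| by
      filter_upwards [eventually_ge_atTop 2] with y hy
      exact (min_le_min_left _ (by nlinarith)).trans (hlb y (by linarith))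
  exact (convexOn_Ioi_of_deriv2_nonneg_off_point hΦ hΦ' hΦ'').exists_pos_mul_sub_le hpos
    (hΦ.differentiableOn one_ne_zero) hΦ'pos

theorem pow_mul_exp_neg_mul_le {c y : ℝ} (hc : 0 < c) (hy : 0 ≤ y) (n : ℕ) :
    y ^ n * exp (-(c * y)) ≤ n ! / c ^ n := by
  have := pow_div_factorial_le_exp _ (mul_nonneg hc.le hy) n
  rw [div_le_iff₀ (by positivity), mul_pow] at this
  rw [exp_neg, ← div_eq_mul_inv, div_le_div_iff₀ (exp_pos _) (by positivity)]
  linarith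

theorem pow_mul_exp_neg_le_of_mul_sub_le {f : ℝ → ℝ} {a b c y : ℝ} (ha : 0 < a)
    (hc : 0 < c) (hf : ∀ y > 0, a * y - b ≤ f y) (hy : 0 < y) (n : ℕ) :
    y ^ n * exp (-(c * f y)) ≤ n ! / (c * a) ^ n * exp (c * b) :=
  calc y ^ n * exp (-(c * f y)) ≤ y ^ n * exp (-(c * a * y)) * exp (c * b) := by
        rw [mul_assoc, ← exp_add]; gcongr; nlinarith [hf y hy]
    _ ≤ n ! / (c * a) ^ n * exp (c * b) := by
        gcongr; exact pow_mul_exp_neg_mul_le (mul_pos hc ha) hy.le n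

noncomputable def logCorrection (K τ₀ τ : ℝ) : ℝ := -K * log (τ / τ₀)

section logCorrection

variable {K τ₀ : ℝ}

theorem logCorrection_self (hτ₀ : τ₀ ≠ 0) : logCorrection K τ₀ τ₀ = 0 := by
  simp [logCorrection, hτ₀]

theorem hasDerivAt_logCorrection {τ : ℝ} (hτ₀ : τ₀ ≠ 0) (hτ : τ ≠ 0) :
    HasDerivAt (logCorrection K τ₀) (-K * τ⁻¹) τ := by
  have := (((hasDerivAt_id τ).div_const τ₀).log (div_ne_zero hτ hτ₀)).const_mul (-K)
  refine this.congr_deriv ?_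
  simp only [id]
  field_simp

theorem contDiffOn_logCorrection (hτ₀ : τ₀ ≠ 0) : ContDiffOn ℝ 1 (logCorrection K τ₀) (Ioi 0) :=
  fun τ hτ => ((contDiffAt_log.2 (div_ne_zero (ne_of_gt hτ) hτ₀)).comp τ
    (contDiffAt_id.div_const τ₀)).const_smul (-K) |>.contDiffWithinAt

theorem antitoneOn_logCorrection (hK : 0 ≤ K) (hτ₀ : 0 < τ₀) :
    AntitoneOn (logCorrection K τ₀) (Ioi 0) := fun a ha b _ hab => by
  have := log_le_log (div_pos ha hτ₀) (div_le_div_of_nonneg_right hab hτ₀.le)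
  unfold logCorrection
  nlinarith

theorem logCorrection_nonpos (hK : 0 ≤ K) (hτ₀ : 0 < τ₀) {τ : ℝ} (hτ : τ₀ ≤ τ) :
    logCorrection K τ₀ τ ≤ 0 := by
  have := log_nonneg ((one_le_div hτ₀).2 hτ)
  unfold logCorrection
  nlinarith

theorem tendsto_logCorrection_div_atTop (hτ₀ : τ₀ ≠ 0) :
    Tendsto (fun τ => logCorrection K τ₀ τ / τ) atTop (𝓝 0) := by
  have hlog : Tendsto (fun τ => log τ / τ) atTop (𝓝 0) := by
    simpa using isLittleO_log_id_atTop.tendsto_div_nhds_zero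
  have := (hlog.const_mul (-K)).add (tendsto_inv_atTop_zero.const_mul (K * log τ₀))
  rw [mul_zero, mul_zero, add_zero] at this
  refine this.congr' ?_
  filter_upwards [eventually_gt_atTop 0] with τ hτ
  rw [logCorrection, log_div hτ.ne' hτ₀]
  ring

end logCorrection

theorem div_le_of_deriv_bounds {g : ℝ → ℝ} {r C y : ℝ} (hC : 0 < C)
    (h₁ : ∀ y ∈ Ioc 0 (1 / C), g y ≤ -(1 / C) * y ^ (-((r - 1) / 2)))
    (h₂ : ∀ y ≥ 1 / C, g y ≤ C * y - 1 / C * y ^ (-((r - 1) / 2))) (hy : 0 < y) :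
    g y / y ≤ C - C⁻¹ * y ^ (-((1 + r) / 2)) := by
  have hbound : g y ≤ C * y - 1 / C * y ^ (-((r - 1) / 2)) := by
    rcases le_or_gt y (1 / C) with hle | hlt
    · nlinarith [h₁ y ⟨hy, hle⟩]
    · exact h₂ y hlt.le
  rw [show -((r - 1) / 2) = -((1 + r) / 2) + 1 by ring, rpow_add_one hy.ne', one_div] at hbound
  rw [div_le_iff₀ hy]
  linarith

theorem two_mul_div_add_le_of_deriv_bounds {g : ℝ → ℝ} {r C p Q y : ℝ} (hC : 0 < C)
    (hp : C ^ 2 ≤ 2 * p)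
    (h₁ : ∀ y ∈ Ioc 0 (1 / C), g y ≤ -(1 / C) * y ^ (-((r - 1) / 2)))
    (h₂ : ∀ y ≥ 1 / C, g y ≤ C * y - 1 / C * y ^ (-((r - 1) / 2))) (hy : 0 < y)
    (hQ : Q ≤ C * (1 + y ^ (-((1 + r) / 2)))) :
    2 * p * (g y / y) + Q ≤ C * (1 + 2 * p) := by
  have hg := div_le_of_deriv_bounds hC h₁ h₂ hy
  have hs : 0 ≤ y ^ (-((1 + r) / 2)) := rpow_nonneg hy.le _
  have hCp : C ≤ C⁻¹ * (2 * p) := by rw [le_inv_mul_iff₀ hC]; nlinarith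
  have hp0 : 0 ≤ p := by nlinarith
  nlinarith [mul_le_mul_of_nonneg_left hCp hs]

section wFun

variable {Φ h : ℝ → ℝ} {γ β p ε t x : ℝ}

theorem wFun_pos (hε : 0 < ε) (hy : 0 < x * t ^ (-γ)) : 0 < wFun Φ γ β p ε h t x :=
  mul_pos (mul_pos hε (rpow_pos_of_pos hy p)) (exp_pos _)

theorem hasDerivAt_wFun_space (hy : 0 < x * t ^ (-γ))
    (hΦ : DifferentiableAt ℝ Φ (x * t ^ (-γ))) :
    HasDerivAt (fun z => wFun Φ γ β p ε h t z)
      (wFun Φ γ β p ε h t x *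
        (t ^ (-γ) * (p / (x * t ^ (-γ)) - t ^ β * deriv Φ (x * t ^ (-γ))))) x := by
  have hlin : HasDerivAt (fun z => z * t ^ (-γ)) (t ^ (-γ)) x := hasDerivAt_mul_const _
  have := ((hlin.rpow_const (p := p) (Or.inl hy.ne')).const_mul ε).mul
    (((hΦ.hasDerivAt.comp x hlin).const_mul (t ^ β)).const_sub (h (t ^ β))).exp
  refine this.congr_deriv ?_
  have hT : t ^ (-γ) ≠ 0 := right_ne_zero_of_mul hy.ne'
  have hx : x ≠ 0 := left_ne_zero_of_mul hy.ne'
  simp only [Function.comp_apply]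
  rw [rpow_sub_one hy.ne', wFun]
  field_simp
  ring

theorem hasDerivAt_deriv_wFun_space (ht : 0 < t) (hx : 0 < x)
    (hΦ : DifferentiableOn ℝ Φ (Ioi 0)) (hΦ' : DifferentiableAt ℝ (deriv Φ) (x * t ^ (-γ))) :
    HasDerivAt (deriv fun z => wFun Φ γ β p ε h t z)
      (wFun Φ γ β p ε h t x * (t ^ (-γ)) ^ 2 *
        ((p / (x * t ^ (-γ)) - t ^ β * deriv Φ (x * t ^ (-γ))) ^ 2
          - p / (x * t ^ (-γ)) ^ 2 - t ^ β * deriv (deriv Φ) (x * t ^ (-γ)))) x := by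
  have hT := rpow_pos_of_pos ht (-γ)
  have hy := mul_pos hx hT
  have hderiv : (deriv fun z => wFun Φ γ β p ε h t z) =ᶠ[𝓝 x] fun z => wFun Φ γ β p ε h t z *
      (t ^ (-γ) * (p / (z * t ^ (-γ)) - t ^ β * deriv Φ (z * t ^ (-γ)))) := by
    filter_upwards [Ioi_mem_nhds hx] with z hz
    have hzT := mul_pos hz hT
    exact (hasDerivAt_wFun_space hzT (hΦ.differentiableAt (Ioi_mem_nhds hzT))).deriv
  have hlin : HasDerivAt (fun z => z * t ^ (-γ)) (t ^ (-γ)) x := hasDerivAt_mul_const _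
  have := (hasDerivAt_wFun_space (β := β) (p := p) (ε := ε) (h := h) hy
    (hΦ.differentiableAt (Ioi_mem_nhds hy))).mul
    ((((hasDerivAt_const x (p : ℝ)).div hlin hy.ne').sub
      ((hΦ'.hasDerivAt.comp x hlin).const_mul (t ^ β))).const_mul (t ^ (-γ)))
  refine (this.congr_of_eventuallyEq hderiv).congr_deriv ?_
  simp only [Function.comp_apply, Pi.sub_apply, Pi.div_apply]
  field_simp
  ring

theorem hasDerivAt_wFun_time (ht : 0 < t) (hx : 0 < x)
    (hΦ : DifferentiableAt ℝ Φ (x * t ^ (-γ))) {h' : ℝ} (hh : HasDerivAt h h' (t ^ β)) :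
    HasDerivAt (fun s => wFun Φ γ β p ε h s x)
      (wFun Φ γ β p ε h t x * (t⁻¹ * (-(p * γ) + β * t ^ β * h' - β * t ^ β * Φ (x * t ^ (-γ))
        + γ * t ^ β * (x * t ^ (-γ)) * deriv Φ (x * t ^ (-γ))))) t := by
  have hy := mul_pos hx (rpow_pos_of_pos ht (-γ))
  have hy' : HasDerivAt (fun s => x * s ^ (-γ)) (x * (-γ * t ^ (-γ - 1))) t :=
    (hasDerivAt_rpow_const (Or.inl ht.ne')).const_mul x
  have hτ : HasDerivAt (fun s => s ^ β) (β * t ^ (β - 1)) t :=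
    hasDerivAt_rpow_const (Or.inl ht.ne')
  have := ((hy'.rpow_const (p := p) (Or.inl hy.ne')).const_mul ε).mul
    ((hh.comp t hτ).sub (hτ.mul (hΦ.hasDerivAt.comp t hy'))).exp
  refine this.congr_deriv ?_
  simp only [Function.comp_apply, Pi.sub_apply, Pi.mul_apply]
  rw [rpow_sub_one hy.ne', rpow_sub_one ht.ne', rpow_sub_one ht.ne', wFun]
  field_simp
  ring

end wFun

/-- With `T = t^{-γ}`, `τ = t^β`, `X = x^{1-r}`, `Y = y^{1-r}` and `F, P, Q = Φ, Φ', Φ''` at `y`,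
this is `L_t ≤ L_x² + L_xx - A x^{1-r}` for `L = log w`, where `h' = -K/τ`. -/
theorem log_subsolution_of_ode {p γ β K A t T τ y F P Q X Y h' : ℝ} (hp : 1 ≤ p) (hγ : 0 ≤ γ)
    (hτ : 0 ≤ τ) (hy : 0 < y) (hode : P ^ 2 - γ * y * P = A * Y - β * F)
    (hkey : 2 * p * (P / y) + Q ≤ β * K) (hh' : τ * h' = -K) (hTτ : T ^ 2 * τ = t⁻¹)
    (hX : X = T ^ 2 * τ ^ 2 * Y) :
    t⁻¹ * (-(p * γ) + β * τ * h' - β * τ * F + γ * τ * y * P) ≤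
      T ^ 2 * ((p / y - τ * P) ^ 2 - p / y ^ 2 - τ * Q) - A * X := by
  have hsplit : T ^ 2 * ((p / y - τ * P) ^ 2 - p / y ^ 2 - τ * Q) - A * X
      - t⁻¹ * (-(p * γ) + β * τ * h' - β * τ * F + γ * τ * y * P)
      = T ^ 2 * (p * (p - 1) / y ^ 2 + τ * (p * γ + (β * K - (2 * p * (P / y) + Q)))) := by
    rw [hX, ← hTτ]
    field_simp
    linear_combination (T ^ 2 * τ ^ 2 * y ^ 2) * hode - (T ^ 2 * β * τ * y ^ 2) * hh'
  have : 0 ≤ T ^ 2 * (p * (p - 1) / y ^ 2 + τ * (p * γ + (β * K - (2 * p * (P / y) + Q)))) := by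
    have : 0 ≤ p * γ := by positivity
    have : 0 ≤ p * (p - 1) := by nlinarith
    have : 0 ≤ β * K - (2 * p * (P / y) + Q) := by linarith
    positivity
  linarith

theorem rpow_neg_sq_mul_rpow {γ β t : ℝ} (ht : 0 < t) (hβ : β = 2 * γ - 1) :
    (t ^ (-γ)) ^ 2 * t ^ β = t⁻¹ := by
  rw [← rpow_natCast, ← rpow_mul ht.le, ← rpow_add ht, ← rpow_neg_one]
  congr 1
  push_cast
  linarith

theorem rpow_one_sub_eq_of_scaling {r γ β t x : ℝ} (ht : 0 < t) (hx : 0 < x)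
    (hγr : γ * (1 + r) = 2) (hβ : β = 2 * γ - 1) :
    x ^ (1 - r) = (t ^ (-γ)) ^ 2 * (t ^ β) ^ 2 * (x * t ^ (-γ)) ^ (1 - r) := by
  have hpow : (t ^ (-γ)) ^ 2 * (t ^ β) ^ 2 * (t ^ (-γ)) ^ (1 - r) = 1 := by
    rw [← rpow_natCast, ← rpow_natCast, ← rpow_mul ht.le, ← rpow_mul ht.le, ← rpow_mul ht.le,
      ← rpow_add ht, ← rpow_add ht]
    convert rpow_zero t using 2
    push_cast
    linear_combination hγr + 2 * hβ
  rw [mul_rpow hx.le (rpow_nonneg ht.le _)]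
  linear_combination (-(x ^ (1 - r))) * hpow

theorem wFun_le_mul_of_bound {Φ h : ℝ → ℝ} {γ β p ε t x τ₀ B : ℝ} (hε : 0 ≤ ε)
    (hy : 0 ≤ x * t ^ (-γ)) (hh : h (t ^ β) ≤ 0) (hτ : τ₀ ≤ t ^ β)
    (hΦ : 0 ≤ Φ (x * t ^ (-γ)))
    (hB : (x * t ^ (-γ)) ^ p * exp (-(τ₀ * Φ (x * t ^ (-γ)))) ≤ B) :
    wFun Φ γ β p ε h t x ≤ ε * B := by
  rw [wFun, mul_assoc]
  gcongr
  refine le_trans ?_ hB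
  have := rpow_nonneg hy p
  gcongr
  nlinarith

theorem deriv_wFun_le_of_ode {Φ : ℝ → ℝ} {r A γ β p ε K τ₀ t x : ℝ} (hr : 1 ≤ r) (hA : 0 ≤ A)
    (hγ : 0 ≤ γ) (hγr : γ * (1 + r) = 2) (hβ : β = 2 * γ - 1) (hp : 1 ≤ p) (hτ₀ : τ₀ ≠ 0)
    (hε : 0 < ε) (ht : 0 < t) (hx : 0 < x) (hΦ : DifferentiableOn ℝ Φ (Ioi 0))
    (hΦ' : DifferentiableAt ℝ (deriv Φ) (x * t ^ (-γ)))
    (hode : deriv Φ (x * t ^ (-γ)) ^ 2 - γ * (x * t ^ (-γ)) * deriv Φ (x * t ^ (-γ)) =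
      A * (x * t ^ (-γ)) ^ (1 - r) - β * Φ (x * t ^ (-γ)))
    (hkey : 2 * p * (deriv Φ (x * t ^ (-γ)) / (x * t ^ (-γ))) + deriv (deriv Φ) (x * t ^ (-γ))
      ≤ β * K)
    (hw : wFun Φ γ β p ε (logCorrection K τ₀) t x ≤ 1) :
    deriv (fun s => wFun Φ γ β p ε (logCorrection K τ₀) s x) t ≤
      deriv (deriv fun z => wFun Φ γ β p ε (logCorrection K τ₀) t z) x
        - A * (x + log (1 / wFun Φ γ β p ε (logCorrection K τ₀) t x)) ^ (1 - r)
          * wFun Φ γ β p ε (logCorrection K τ₀) t x := by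
  have hτ := rpow_pos_of_pos ht β
  have hy := mul_pos hx (rpow_pos_of_pos ht (-γ))
  rw [(hasDerivAt_wFun_time ht hx (hΦ.differentiableAt (Ioi_mem_nhds hy))
      (hasDerivAt_logCorrection hτ₀ hτ.ne')).deriv,
    (hasDerivAt_deriv_wFun_space ht hx hΦ hΦ').deriv]
  set w := wFun Φ γ β p ε (logCorrection K τ₀) t x
  have hw0 : 0 < w := wFun_pos hε hy
  have hcore := log_subsolution_of_ode hp hγ hτ.le hy hode hkey (h' := -K * (t ^ β)⁻¹)
    (by field_simp) (rpow_neg_sq_mul_rpow ht hβ) (rpow_one_sub_eq_of_scaling ht hx hγr hβ)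
  have habsorb : A * (x + log (1 / w)) ^ (1 - r) ≤ A * x ^ (1 - r) := by
    have : 0 ≤ log (1 / w) := log_nonneg (by rw [le_div_iff₀ hw0]; linarith)
    exact mul_le_mul_of_nonneg_left (rpow_le_rpow_of_nonpos hx (by linarith) (by linarith)) hA
  nlinarith [mul_le_mul_of_nonneg_left hcore hw0.le, mul_le_mul_of_nonneg_right habsorb hw0.le]

theorem stmt_19_general (r A : ℝ) (hr1 : 1 < r) (hr3 : r < 3) (hA : 0 < A)
    (γ β : ℝ) (hγ : γ = 2 / (1 + r)) (hβ : β = (3 - r) / (1 + r))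
    (ybar : ℝ)
    (Φ : ℝ → ℝ)
    (hΦreg : ContDiffOn ℝ 1 Φ (Set.Ioi 0))
    (hΦ'' : ∀ y > (0:ℝ), y ≠ ybar → DifferentiableAt ℝ (deriv Φ) y)
    (hΦode : ∀ y > (0:ℝ),
      (deriv Φ y) ^ 2 - γ * y * deriv Φ y = A * y ^ (1 - r) - β * Φ y)
    (C₁ : ℝ) (hC₁ : 0 < C₁)
    (hΦlb : ∀ y > (0:ℝ), min (1 / C₁) (y ^ 2 / 4) ≤ Φ y)
    (hΦ'ub1 : ∀ y ∈ Set.Ioc (0:ℝ) (1 / C₁),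
      deriv Φ y ≤ -(1 / C₁) * y ^ (-((r - 1) / 2)))
    (hΦ'ub2 : ∀ y ≥ 1 / C₁, deriv Φ y ≤ C₁ * y - 1 / C₁ * y ^ (-((r - 1) / 2)))
    (hΦ''bd : ∀ y > (0:ℝ), y ≠ ybar →
      0 ≤ deriv (deriv Φ) y ∧ deriv (deriv Φ) y ≤ C₁ * (1 + y ^ (-((1 + r) / 2)))) :
    ∃ p > (0:ℝ), ∃ ε₀ > (0:ℝ), ∃ h : ℝ → ℝ,
      ContDiffOn ℝ 1 h (Set.Ioi 0) ∧
      AntitoneOn h (Set.Ioi 0) ∧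
      h ((2:ℝ) ^ (-β)) = 0 ∧
      Tendsto (fun τ => h τ / τ) atTop (nhds 0) ∧
      ∀ ε : ℝ, 0 < ε → ε < ε₀ → ∀ t ≥ (1/2 : ℝ), ∀ x > (0:ℝ),
        x * t ^ (-γ) ≠ ybar →
        0 < wFun Φ γ β p ε h t x ∧
        wFun Φ γ β p ε h t x ≤ 1 ∧
        0 < x + Real.log (1 / wFun Φ γ β p ε h t x) ∧
        deriv (fun s => wFun Φ γ β p ε h s x) t ≤
          deriv (deriv (fun z => wFun Φ γ β p ε h t z)) x
            - A * (x + Real.log (1 / wFun Φ γ β p ε h t x)) ^ (1 - r)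
                * wFun Φ γ β p ε h t x := by
  have hγr : γ * (1 + r) = 2 := by rw [hγ]; field_simp
  have hβγ : β = 2 * γ - 1 := by rw [hβ, hγ]; field_simp; ring
  have hγ0 : 0 < γ := by rw [hγ]; exact div_pos two_pos (by linarith)
  have hβ0 : 0 < β := by rw [hβ]; exact div_pos (by linarith) (by linarith)
  have hΦpos : ∀ y > 0, 0 < Φ y := fun y hy =>
    (lt_min (by positivity) (by positivity)).trans_le (hΦlb y hy)
  obtain ⟨a, ha, b, hlin⟩ := exists_pos_mul_sub_le_of_ode hγ0.le hβ0 hr1 hC₁ hΦreg hΦ''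
    (fun y hy hne => (hΦ''bd y hy hne).1) hΦode hΦlb
  obtain ⟨n, hn1, hn2⟩ : ∃ n : ℕ, (1 : ℝ) ≤ n ∧ C₁ ^ 2 ≤ 2 * n :=
    ⟨⌈C₁ ^ 2⌉₊ + 1, by simp, by push_cast; nlinarith [Nat.le_ceil (C₁ ^ 2), sq_nonneg C₁]⟩
  have hτ₀ : (0 : ℝ) < 2 ^ (-β) := by positivity
  have hK : 0 ≤ C₁ * (1 + 2 * n) / β := by positivity
  have hB : 0 < n ! / (2 ^ (-β) * a) ^ n * exp (2 ^ (-β) * b) := by positivity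
  set τ₀ : ℝ := 2 ^ (-β)
  set K := C₁ * (1 + 2 * n) / β
  set B := n ! / (τ₀ * a) ^ n * exp (τ₀ * b)
  refine ⟨n, by positivity, B⁻¹, inv_pos.2 hB, logCorrection K τ₀,
    contDiffOn_logCorrection hτ₀.ne', antitoneOn_logCorrection hK hτ₀, logCorrection_self hτ₀.ne',
    tendsto_logCorrection_div_atTop hτ₀.ne', ?_⟩
  intro ε hε hεB t ht x hx hne
  have ht0 : 0 < t := by linarith
  have hy : 0 < x * t ^ (-γ) := mul_pos hx (rpow_pos_of_pos ht0 _)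
  have hτ : τ₀ ≤ t ^ β := by
    rw [show τ₀ = 2⁻¹ ^ β from by rw [inv_rpow zero_le_two, ← rpow_neg zero_le_two]]
    exact rpow_le_rpow (by norm_num) (by linarith) hβ0.le
  have hbound : (x * t ^ (-γ)) ^ (n : ℝ) * exp (-(τ₀ * Φ (x * t ^ (-γ)))) ≤ B := by
    rw [rpow_natCast]
    exact pow_mul_exp_neg_le_of_mul_sub_le ha hτ₀ hlin hy n
  have hw0 : 0 < wFun Φ γ β n ε (logCorrection K τ₀) t x := wFun_pos hε hy
  have hw1 : wFun Φ γ β n ε (logCorrection K τ₀) t x ≤ 1 :=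
    calc _ ≤ ε * B := wFun_le_mul_of_bound hε.le hy.le (logCorrection_nonpos hK hτ₀ hτ) hτ
          (hΦpos _ hy).le hbound
      _ ≤ B⁻¹ * B := by gcongr
      _ = 1 := inv_mul_cancel₀ hB.ne'
  refine ⟨hw0, hw1, ?_, deriv_wFun_le_of_ode hr1.le hA.le hγ0.le hγr hβγ hn1 hτ₀.ne' hε ht0 hx
    (hΦreg.differentiableOn one_ne_zero) (hΦ'' _ hy hne) (hΦode _ hy) ?_ hw1⟩
  · linarith [log_nonneg (one_le_one_div hw0 hw1)]
  · rw [mul_div_cancel₀ _ hβ0.ne']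
    exact two_mul_div_add_le_of_deriv_bounds hC₁ hn2 hΦ'ub1 hΦ'ub2 hy (hΦ''bd _ hy hne).2

/-- existence of a subsolution built from Φ in the moving frame,
for the case 1 < r < 3. -/
theorem stmt_19 (r A : ℝ) (hr1 : 1 < r) (hr3 : r < 3) (hA : 0 < A)
    (γ β : ℝ) (hγ : γ = 2 / (1 + r)) (hβ : β = (3 - r) / (1 + r))
    (Γ : ℝ → ℝ)
    (hΓ : ∀ y : ℝ, 0 < y → Γ y = γ ^ 2 * y ^ 2 / (4 * β) + A * y ^ (1 - r) / β)
    (ybar : ℝ) (hybar : ybar = (1 + r) ^ γ * A ^ (γ / 2))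
    (Φ : ℝ → ℝ)
    (hΦcont : ContinuousOn Φ (Set.Ici 0))
    (hΦreg : ContDiffOn ℝ 1 Φ (Set.Ioi 0))
    (hΦ'' : ∀ y > (0:ℝ), y ≠ ybar → DifferentiableAt ℝ (deriv Φ) y)
    (hΦode : ∀ y > (0:ℝ),
      (deriv Φ y) ^ 2 - γ * y * deriv Φ y = A * y ^ (1 - r) - β * Φ y)
    (C₁ : ℝ) (hC₁ : 0 < C₁)
    (hΦlb : ∀ y > (0:ℝ), min (1 / C₁) (y ^ 2 / 4) ≤ Φ y)
    (hΦ'ub1 : ∀ y ∈ Set.Ioc (0:ℝ) (1 / C₁),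
      deriv Φ y ≤ -(1 / C₁) * y ^ (-((r - 1) / 2)))
    (hΦ'ub2 : ∀ y ≥ 1 / C₁, deriv Φ y ≤ C₁ * y - 1 / C₁ * y ^ (-((r - 1) / 2)))
    (hΦ''bd : ∀ y > (0:ℝ), y ≠ ybar →
      0 ≤ deriv (deriv Φ) y ∧ deriv (deriv Φ) y ≤ C₁ * (1 + y ^ (-((1 + r) / 2)))) :
    ∃ p > (0:ℝ), ∃ ε₀ > (0:ℝ), ∃ h : ℝ → ℝ,
      ContDiffOn ℝ 1 h (Set.Ioi 0) ∧
      AntitoneOn h (Set.Ioi 0) ∧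
      h ((2:ℝ) ^ (-β)) = 0 ∧
      Tendsto (fun τ => h τ / τ) atTop (nhds 0) ∧
      ∀ ε : ℝ, 0 < ε → ε < ε₀ → ∀ t ≥ (1/2 : ℝ), ∀ x > (0:ℝ),
        x * t ^ (-γ) ≠ ybar →
        0 < wFun Φ γ β p ε h t x ∧
        wFun Φ γ β p ε h t x ≤ 1 ∧
        0 < x + Real.log (1 / wFun Φ γ β p ε h t x) ∧
        deriv (fun s => wFun Φ γ β p ε h s x) t ≤
          deriv (deriv (fun z => wFun Φ γ β p ε h t z)) x
            - A * (x + Real.log (1 / wFun Φ γ β p ε h t x)) ^ (1 - r)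
                * wFun Φ γ β p ε h t x :=
  stmt_19_general r A hr1 hr3 hA γ β hγ hβ ybar Φ hΦreg hΦ'' hΦode C₁ hC₁ hΦlb hΦ'ub1 hΦ'ub2 hΦ''bd
end
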